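/- arXiv:0710.1046 — 6 statements merged into one kernel-verified Lean document; each statement's English description precedes it below -/
import Mathlib

section
/- Let m, β_1 be positive integers with m < β_1, and let (a_j)_{j ≥ β_1+1} be real numbers. Let t̃(t) = t + Σ_{k≥2} c_k t^k be the unique formal power series with leading term t satisfying t̃(t)^{β_1−m} = t^{β_1−m} + Σ_{j=β_1+1}^∞ a_j t^{j−m}, and let t(t̃) = t̃ + Σ_{k=2}^∞ b_k t̃^k be its compositional inverse. Then for every k ≥ 2, b_k = −a_{k+β_1−1}/(β_1 − m) + P_k(a_{β_1+1}, …, a_{k+β_1−2}), where P_k is a polynomial with rational coefficients depending only on k, m and β_1, and every monomial (a_{β_1+j_1})^{α_1} ⋯ (a_{β_1+j_r})^{α_r} appearing with nonzero coefficient in P_k satisfies α_1 j_1 + ⋯ + α_r j_r = k − 1. (The lemma in the proof of Proposition 4.2 of the paper.) -/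
/-!
Write `d = β₁ - m`. The hypothesis says `t̃ = t · U` with `U^d = 1 + ∑_{N ≥ 1} a_{β₁+N} t^N`, so
`U` is the `d`-th root of this series, computed coefficient by coefficient, and the coefficients
`b_k` of the inverse are determined recursively by comparing coefficients in `∑ₙ bₙ t̃ⁿ = t`. Both
recursions make sense over `ℚ[X₁, X₂, …]` with `X_N` in place of `a_{β₁+N}`, and specialising
recovers the real coefficients. Giving `X_j` the weight `j`, both recursions preserve weighted
homogeneity: `[t^N] U` has weight `N` and `b_k` has weight `k - 1`. The variable `X_{k-1}` enters
`b_k` only through the term `-[t^{k-1}] U = -(X_{k-1} - …)/d` of the recursion, where `…` involves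
only `X₁, …, X_{k-2}`.
-/

/-- Composition `F ∘ G` of formal power series (the correct composition whenever the constant
term of `G` vanishes: then `coeff k (G^n) = 0` for `n > k`, so the truncated sum below is the
full substitution). -/
noncomputable def pscomp (F G : PowerSeries ℝ) : PowerSeries ℝ :=
  PowerSeries.mk fun k =>
    ∑ n ∈ Finset.range (k + 1), PowerSeries.coeff n F * PowerSeries.coeff k (G ^ n)

namespace PowerSeries

section Root

variable {R : Type*} [CommRing R]

theorem coeff_pow_add_C_mul_X_pow {V : R⟦X⟧} (hV : constantCoeff V = 1) {n : ℕ} (hn : n ≠ 0)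
    (c : R) (d : ℕ) :
    coeff n ((V + C c * X ^ n) ^ d) = coeff n (V ^ d) + d * c := by
  obtain ⟨Q, hQ⟩ := Polynomial.binomExpansion (Polynomial.X ^ d) V (C c * X ^ n)
  simp only [Polynomial.eval_pow, Polynomial.eval_X, Polynomial.derivative_X_pow,
    Polynomial.eval_mul, Polynomial.eval_C] at hQ
  have hlin : (d : R⟦X⟧) * V ^ (d - 1) * (C c * X ^ n) =
      ((d : R⟦X⟧) * V ^ (d - 1) * C c) * X ^ n := by ring
  have hsq : Q * (C c * X ^ n) ^ 2 = (Q * C (c ^ 2)) * X ^ (n * 2) := by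
    rw [map_pow]; ring
  rw [hQ, hlin, hsq, map_add, map_add, coeff_mul_X_pow', coeff_mul_X_pow', if_pos le_rfl,
    if_neg (by omega), Nat.sub_self, coeff_zero_eq_constantCoeff]
  simp [hV]

variable [Algebra ℚ R]

/-- By `coeff_pow_add_C_mul_X_pow`, the coefficient of `t^(N+1)` enters `[t^(N+1)] U^d` only
through the term `d • c_(N+1)`; the rest comes from the truncation of `U` at degree `N`. -/
noncomputable def rootCoeff (d : ℕ) (F : R⟦X⟧) : ℕ → R
  | 0 => 1
  | N + 1 => (d : ℚ)⁻¹ • (coeff (N + 1) F -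
      coeff (N + 1) ((mk fun i => if _ : i ≤ N then rootCoeff d F i else 0) ^ d))

noncomputable def root (d : ℕ) (F : R⟦X⟧) : R⟦X⟧ := mk (rootCoeff d F)

variable (d : ℕ) (F : R⟦X⟧)

theorem constantCoeff_root : constantCoeff (root d F) = 1 := by
  simp [root, rootCoeff]

theorem constantCoeff_map_root {S : Type*} [CommRing S] (φ : R →+* S) :
    constantCoeff (map φ (root d F)) = 1 := by
  rw [← coeff_zero_eq_constantCoeff_apply, coeff_map, coeff_zero_eq_constantCoeff_apply,
    constantCoeff_root, map_one]

theorem coeff_root_succ (N : ℕ) :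
    coeff (N + 1) (root d F) =
      (d : ℚ)⁻¹ • (coeff (N + 1) F - coeff (N + 1) ((trunc (N + 1) (root d F) : R⟦X⟧) ^ d)) := by
  have htrunc : (trunc (N + 1) (root d F) : R⟦X⟧) =
      mk fun i => if _ : i ≤ N then rootCoeff d F i else 0 := by
    ext i
    simp [coeff_trunc, root]
  rw [htrunc, root, coeff_mk, rootCoeff]

variable {d F} in
theorem root_pow (hd : d ≠ 0) (hF : constantCoeff F = 1) : root d F ^ d = F := by
  ext (_ | N)
  · simp [constantCoeff_root, hF]
  set U := root d F
  have hV : constantCoeff (trunc (N + 1) U : R⟦X⟧) = 1 := by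
    rw [← coeff_zero_eq_constantCoeff_apply, Polynomial.coeff_coe, coeff_trunc, if_pos N.succ_pos,
      coeff_zero_eq_constantCoeff_apply, constantCoeff_root]
  have hlow : coeff (N + 1) (U ^ d) = coeff (N + 1) ((trunc (N + 2) U : R⟦X⟧) ^ d) := by
    have := congrArg (Polynomial.coeff · (N + 1)) (trunc_trunc_pow U (N + 2) d)
    rwa [coeff_trunc, coeff_trunc, if_pos (by omega), if_pos (by omega), eq_comm] at this
  have hd' : (d : ℚ) ≠ 0 := by exact_mod_cast hd
  rw [hlow, trunc_succ, Polynomial.coe_add, Polynomial.coe_monomial, monomial_eq_C_mul_X_pow,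
    coeff_pow_add_C_mul_X_pow hV N.succ_ne_zero, coeff_root_succ, ← nsmul_eq_mul,
    ← Nat.cast_smul_eq_nsmul ℚ, smul_smul, mul_inv_cancel₀ hd', one_smul, add_sub_cancel]

end Root

theorem eq_of_pow_eq_pow_of_constantCoeff_eq_one {S : Type*} [CommRing S] [IsDomain S]
    [CharZero S] {A B : S⟦X⟧} (hA : constantCoeff A = 1) (hB : constantCoeff B = 1) {d : ℕ}
    (hd : d ≠ 0) (h : A ^ d = B ^ d) : A = B := by
  have hgeom := geom_sum₂_mul A B d
  rw [h, sub_self] at hgeom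
  refine sub_eq_zero.1 ((mul_eq_zero.1 hgeom).resolve_left fun hsum => ?_)
  have := congrArg constantCoeff hsum
  simp [hA, hB, hd] at this

theorem eq_X_mul_map_root {R S : Type*} [CommRing R] [Algebra ℚ R] [CommRing S] [IsDomain S]
    [CharZero S] (φ : R →+* S) {F : R⟦X⟧} (hF : constantCoeff F = 1) {d : ℕ} (hd : d ≠ 0)
    {T : S⟦X⟧} (hT0 : coeff 0 T = 0) (hT1 : coeff 1 T = 1) (hT : T ^ d = X ^ d * map φ F) :
    T = X * map φ (root d F) := by
  obtain ⟨U, rfl⟩ : X ∣ T := X_dvd_iff.2 (by rwa [← coeff_zero_eq_constantCoeff_apply])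
  rw [coeff_succ_X_mul, coeff_zero_eq_constantCoeff_apply] at hT1
  rw [mul_pow, ← root_pow hd hF, map_pow] at hT
  congr 1
  exact eq_of_pow_eq_pow_of_constantCoeff_eq_one hT1 (constantCoeff_map_root d F φ) hd
    (mul_left_cancel₀ (pow_ne_zero d X_ne_zero) hT)

section CompInvCoeff

variable {R : Type*} [CommRing R]

/-- For `T = t + O(t²)`, the coefficients of the series `B` with `B ∘ T = t`: compare the
coefficients of `t^(k+1)` in `∑ₙ bₙ Tⁿ = t`, where `[t^(k+1)] T^(k+1) = 1`. -/
noncomputable def compInvCoeff (T : R⟦X⟧) : ℕ → R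
  | 0 => 0
  | k + 1 =>
    coeff (k + 1) X - ∑ n : Fin (k + 1), compInvCoeff T n * coeff (k + 1) (T ^ (n : ℕ))

@[simp] theorem compInvCoeff_zero (T : R⟦X⟧) : compInvCoeff T 0 = 0 := by simp [compInvCoeff]

theorem compInvCoeff_succ (T : R⟦X⟧) (k : ℕ) :
    compInvCoeff T (k + 1) =
      coeff (k + 1) X - ∑ n ∈ Finset.range (k + 1), compInvCoeff T n * coeff (k + 1) (T ^ n) := by
  rw [compInvCoeff, Fin.sum_univ_eq_sum_range (fun n => compInvCoeff T n * coeff (k + 1) (T ^ n))]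

@[simp] theorem compInvCoeff_one (T : R⟦X⟧) : compInvCoeff T 1 = 1 := by
  simp [compInvCoeff_succ]

theorem map_compInvCoeff {S : Type*} [CommRing S] (f : R →+* S) (T : R⟦X⟧) (k : ℕ) :
    f (compInvCoeff T k) = compInvCoeff (map f T) k := by
  induction k using Nat.strong_induction_on with
  | _ k ih =>
    rcases k with _ | k
    · simp
    rw [compInvCoeff_succ, compInvCoeff_succ, map_sub, map_sum, ← map_X f, coeff_map]
    congr 1
    refine Finset.sum_congr rfl fun n hn => ?_
    rw [map_mul, ih n (Finset.mem_range.1 hn), ← coeff_map, map_pow]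

theorem compInvCoeff_X_mul_add_two (U : R⟦X⟧) (k : ℕ) :
    compInvCoeff (X * U) (k + 2) = -coeff (k + 1) U -
      ∑ n ∈ Finset.range k, compInvCoeff (X * U) (n + 2) * coeff (k - n) (U ^ (n + 2)) := by
  have hterm : ∀ n ∈ Finset.range k,
      compInvCoeff (X * U) (n + 1 + 1) * coeff (k + 1 + 1) ((X * U) ^ (n + 1 + 1)) =
        compInvCoeff (X * U) (n + 2) * coeff (k - n) (U ^ (n + 2)) := fun n hn => by
    rw [mul_pow, coeff_X_pow_mul', if_pos (by have := Finset.mem_range.1 hn; omega),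
      show k + 1 + 1 - (n + 1 + 1) = k - n by omega]
  rw [compInvCoeff_succ, Finset.sum_range_succ', Finset.sum_range_succ',
    Finset.sum_congr rfl hterm, coeff_X, if_neg (by omega), compInvCoeff_zero, zero_mul,
    add_zero, zero_add, compInvCoeff_one, one_mul, pow_one, coeff_succ_X_mul]
  abel

end CompInvCoeff

theorem coeff_eq_compInvCoeff_of_pscomp_eq_X {B V : ℝ⟦X⟧} (hV : constantCoeff V = 1)
    (hB0 : coeff 0 B = 0) (h : pscomp B (X * V) = X) (k : ℕ) :
    coeff k B = compInvCoeff (X * V) k := by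
  induction k using Nat.strong_induction_on with
  | _ k ih =>
    rcases k with _ | k
    · rw [hB0, compInvCoeff_zero]
    have hk := congrArg (coeff (k + 1)) h
    rw [pscomp, coeff_mk, Finset.sum_range_succ, mul_pow, coeff_X_pow_mul', if_pos le_rfl,
      Nat.sub_self, coeff_zero_eq_constantCoeff_apply, map_pow, hV, one_pow, mul_one] at hk
    rw [compInvCoeff_succ, ← hk,
      Finset.sum_congr rfl fun n hn => by rw [ih n (Finset.mem_range.1 hn)], add_sub_cancel_left]

theorem coeff_pow_mem_of_coeff_mem {R σ : Type*} [CommSemiring R] [SetLike σ R]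
    [AddSubmonoidClass σ R] (𝒜 : ℕ → σ) [SetLike.GradedMonoid 𝒜] {A : R⟦X⟧}
    (hA : ∀ i, coeff i A ∈ 𝒜 i) (e n : ℕ) : coeff n (A ^ e) ∈ 𝒜 n := by
  induction e generalizing n with
  | zero =>
    rw [pow_zero, coeff_one]
    split_ifs with hn
    · exact hn ▸ SetLike.GradedOne.one_mem
    · exact zero_mem _
  | succ e ih =>
    rw [pow_succ, coeff_mul]
    refine sum_mem fun p hp => ?_
    rw [← Finset.HasAntidiagonal.mem_antidiagonal.1 hp]
    exact SetLike.GradedMul.mul_mem (ih p.1) (hA p.2)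

theorem coeff_pow_mem_of_forall_coeff_mem {R S : Type*} [CommSemiring R] [SetLike S R]
    [SubsemiringClass S R] {s : S} {A : R⟦X⟧} (hA : ∀ i, coeff i A ∈ s) (e n : ℕ) :
    coeff n (A ^ e) ∈ s := by
  induction e generalizing n with
  | zero =>
    rw [pow_zero, coeff_one]
    split_ifs
    · exact one_mem s
    · exact zero_mem s
  | succ e ih =>
    rw [pow_succ, coeff_mul]
    exact sum_mem fun p _ => mul_mem (ih p.1) (hA p.2)

section Graded

variable {R σ : Type*} [CommRing R] [SetLike σ R] [AddSubgroupClass σ R]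
  (𝒜 : ℕ → σ) [SetLike.GradedMonoid 𝒜]

theorem compInvCoeff_X_mul_mem {U : R⟦X⟧} (hU : ∀ i, coeff i U ∈ 𝒜 i) (k : ℕ) :
    compInvCoeff (X * U) (k + 1) ∈ 𝒜 k := by
  induction k using Nat.strong_induction_on with
  | _ k ih =>
    rw [compInvCoeff_succ]
    refine sub_mem ?_ (sum_mem fun n hn => ?_)
    · rw [coeff_X]
      split_ifs with hk
      · exact Nat.succ_injective hk ▸ SetLike.GradedOne.one_mem
      · exact zero_mem _
    rcases n with _ | n
    · rw [compInvCoeff_zero, zero_mul]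
      exact zero_mem _
    have hnk : n < k := by have := Finset.mem_range.1 hn; omega
    rw [mul_pow, coeff_X_pow_mul', if_pos (by omega), show k + 1 - (n + 1) = k - n by omega]
    simpa [Nat.add_sub_cancel' hnk.le] using
      SetLike.GradedMul.mul_mem (ih n hnk) (coeff_pow_mem_of_coeff_mem 𝒜 hU (n + 1) (k - n))

theorem coeff_root_mem [Algebra ℚ R] [SMulMemClass σ ℚ R] {F : R⟦X⟧}
    (hF : ∀ i, coeff i F ∈ 𝒜 i) (d N : ℕ) : coeff N (root d F) ∈ 𝒜 N := by
  induction N using Nat.strong_induction_on with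
  | _ N ih =>
    rcases N with _ | N
    · rw [coeff_zero_eq_constantCoeff_apply, constantCoeff_root]
      exact SetLike.GradedOne.one_mem
    have htrunc : ∀ i, coeff i (trunc (N + 1) (root d F) : R⟦X⟧) ∈ 𝒜 i := by
      intro i
      rw [Polynomial.coeff_coe, coeff_trunc]
      split_ifs with hi
      · exact ih i hi
      · exact zero_mem _
    rw [coeff_root_succ]
    exact SMulMemClass.smul_mem _ (sub_mem (hF _) (coeff_pow_mem_of_coeff_mem 𝒜 htrunc d _))

end Graded

end PowerSeries

open PowerSeries

/-- Variable `j` stands for `a_{β₁+j}` and has weight `j`; only `X 1, …, X n` may occur. -/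
noncomputable def isobaric (n : ℕ) : Submodule ℚ (MvPolynomial ℕ ℚ) :=
  MvPolynomial.weightedHomogeneousSubmodule ℚ id n ⊓
    Subalgebra.toSubmodule (MvPolynomial.supported ℚ (Set.Icc 1 n))

instance : SetLike.GradedMonoid isobaric where
  one_mem := ⟨MvPolynomial.isWeightedHomogeneous_one ℚ id, Subalgebra.one_mem _⟩
  mul_mem i j _ _ hx hy :=
    ⟨hx.1.mul hy.1,
      Subalgebra.mul_mem _
        (MvPolynomial.supported_mono (Set.Icc_subset_Icc_right (by omega)) hx.2)
        (MvPolynomial.supported_mono (Set.Icc_subset_Icc_right (by omega)) hy.2)⟩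

theorem mem_supported_of_mem_isobaric {n b : ℕ} {p : MvPolynomial ℕ ℚ} (hp : p ∈ isobaric n)
    (hnb : n ≤ b) : p ∈ MvPolynomial.supported ℚ (Set.Icc 1 b) :=
  MvPolynomial.supported_mono (Set.Icc_subset_Icc_right hnb) hp.2

noncomputable def genericSeries : (MvPolynomial ℕ ℚ)⟦X⟧ :=
  mk fun N => if N = 0 then 1 else MvPolynomial.X N

theorem constantCoeff_genericSeries : constantCoeff genericSeries = 1 := by
  simp [genericSeries, ← coeff_zero_eq_constantCoeff_apply]

theorem coeff_genericSeries_mem_isobaric (N : ℕ) : coeff N genericSeries ∈ isobaric N := by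
  rw [genericSeries, coeff_mk]
  split_ifs with hN
  · exact hN ▸ SetLike.GradedOne.one_mem
  · exact ⟨MvPolynomial.isWeightedHomogeneous_X ℚ id N,
      MvPolynomial.X_mem_supported.2 ⟨by omega, le_rfl⟩⟩

/-- The coefficient `b_k` of the inverse series as a polynomial in the `a_{β₁+j}`,
for `d = β₁ - m`. -/
noncomputable def genericInvCoeff (d k : ℕ) : MvPolynomial ℕ ℚ :=
  compInvCoeff (X * root d genericSeries) k

theorem coeff_root_genericSeries_mem_isobaric (d N : ℕ) :
    coeff N (root d genericSeries) ∈ isobaric N :=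
  coeff_root_mem isobaric coeff_genericSeries_mem_isobaric d N

theorem genericInvCoeff_succ_mem_isobaric (d k : ℕ) : genericInvCoeff d (k + 1) ∈ isobaric k :=
  compInvCoeff_X_mul_mem isobaric (coeff_root_genericSeries_mem_isobaric d) k

theorem genericInvCoeff_add_two_add_mem_supported (d k : ℕ) :
    genericInvCoeff d (k + 2) + MvPolynomial.C (d : ℚ)⁻¹ * MvPolynomial.X (k + 1) ∈
      MvPolynomial.supported ℚ (Set.Icc 1 k) := by
  set U := root d genericSeries
  have htrunc : ∀ i, coeff i (trunc (k + 1) U : (MvPolynomial ℕ ℚ)⟦X⟧) ∈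
      MvPolynomial.supported ℚ (Set.Icc 1 k) := by
    intro i
    rw [Polynomial.coeff_coe, coeff_trunc]
    split_ifs with hi
    · exact mem_supported_of_mem_isobaric (coeff_root_genericSeries_mem_isobaric d i) (by omega)
    · exact zero_mem _
  rw [genericInvCoeff, compInvCoeff_X_mul_add_two, coeff_root_succ, genericSeries, coeff_mk,
    if_neg k.succ_ne_zero, ← genericSeries, MvPolynomial.C_mul', smul_sub,
    show ∀ a b c : MvPolynomial ℕ ℚ, -(a - b) - c + a = b - c by intros; abel]
  refine sub_mem (Subalgebra.smul_mem _ (coeff_pow_mem_of_forall_coeff_mem htrunc d _) _)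
    (sum_mem fun n hn => mul_mem ?_ ?_)
  · exact mem_supported_of_mem_isobaric (genericInvCoeff_succ_mem_isobaric d (n + 1))
      (Finset.mem_range.1 hn)
  · exact mem_supported_of_mem_isobaric
      (coeff_pow_mem_of_coeff_mem isobaric (coeff_root_genericSeries_mem_isobaric d) _ _)
      (by omega)

theorem mk_eq_X_pow_mul_map_genericSeries {m β₁ : ℕ} (hmβ : m ≤ β₁) (a : ℕ → ℝ) :
    (mk fun n => if n = β₁ - m then 1 else if β₁ < n + m then a (n + m) else 0 : ℝ⟦X⟧) =
      X ^ (β₁ - m) * map (MvPolynomial.aeval fun j => a (β₁ + j)).toRingHom genericSeries := by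
  ext n
  rw [coeff_mk, coeff_X_pow_mul', coeff_map, genericSeries, coeff_mk]
  split_ifs <;> (try simp) <;> first | omega | (congr 1; omega)

theorem coeff_eq_aeval_genericInvCoeff {m β₁ : ℕ} (hmβ : m < β₁) {a : ℕ → ℝ} {T B : ℝ⟦X⟧}
    (hT0 : coeff 0 T = 0) (hT1 : coeff 1 T = 1)
    (hT : T ^ (β₁ - m) =
      mk fun n => if n = β₁ - m then 1 else if β₁ < n + m then a (n + m) else 0)
    (hB0 : coeff 0 B = 0) (hBT : pscomp B T = X) (k : ℕ) :
    coeff k B = MvPolynomial.aeval (fun j => a (β₁ + j)) (genericInvCoeff (β₁ - m) k) := by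
  set φ : MvPolynomial ℕ ℚ →+* ℝ := (MvPolynomial.aeval fun j => a (β₁ + j)).toRingHom
  obtain rfl := eq_X_mul_map_root φ constantCoeff_genericSeries (by omega) hT0 hT1
    (hT.trans (mk_eq_X_pow_mul_map_genericSeries hmβ.le a))
  rw [coeff_eq_compInvCoeff_of_pscomp_eq_X (constantCoeff_map_root _ _ φ) hB0 hBT, ← map_X φ,
    ← map_mul, ← map_compInvCoeff]
  rfl

theorem lemma_prop42_inverse_series_coefficients_general
    (m β₁ : ℕ) (hmβ : m < β₁) (k : ℕ) (hk : 2 ≤ k) :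
    ∃ P : MvPolynomial ℕ ℚ,
      (∀ d ∈ P.support, ∀ j ∈ d.support, 1 ≤ j ∧ j ≤ k - 2) ∧
      (∀ d ∈ P.support, (d.sum fun j α => j * α) = k - 1) ∧
      ∀ (a : ℕ → ℝ) (T B : PowerSeries ℝ),
        PowerSeries.coeff 0 T = 0 →
        PowerSeries.coeff 1 T = 1 →
        T ^ (β₁ - m) =
          PowerSeries.mk (fun n => if n = β₁ - m then 1
            else if β₁ < n + m then a (n + m) else 0) →
        PowerSeries.coeff 0 B = 0 →
        pscomp B T = PowerSeries.X →
        pscomp T B = PowerSeries.X →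
        PowerSeries.coeff k B =
          - a (k + β₁ - 1) / ((β₁ : ℝ) - (m : ℝ)) +
            MvPolynomial.aeval (fun j => a (β₁ + j)) P := by
  obtain ⟨k, rfl⟩ := Nat.exists_eq_add_of_le' hk
  set d := β₁ - m
  set P := genericInvCoeff d (k + 2) + MvPolynomial.C (d : ℚ)⁻¹ * MvPolynomial.X (k + 1) with hP
  have hP_weight : P ∈ MvPolynomial.weightedHomogeneousSubmodule ℚ id (k + 1) :=
    add_mem (genericInvCoeff_succ_mem_isobaric d (k + 1)).1
      ((MvPolynomial.isWeightedHomogeneous_X ℚ id (k + 1)).C_mul _)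
  have hP_vars : P ∈ MvPolynomial.supported ℚ (Set.Icc 1 k) :=
    genericInvCoeff_add_two_add_mem_supported d k
  refine ⟨P, fun μ hμ j hj => ?_, fun μ hμ => ?_, ?_⟩
  · simpa using MvPolynomial.mem_supported.1 hP_vars
      ((MvPolynomial.mem_vars_iff_mem_support j).2 ⟨μ, hμ, hj⟩)
  · simpa [Finsupp.weight_apply, mul_comm] using hP_weight (MvPolynomial.mem_support_iff.1 hμ)
  intro a T B hT0 hT1 hT hB0 hBT _
  have hlead : MvPolynomial.aeval (fun j => a (β₁ + j))
      (MvPolynomial.C (d : ℚ)⁻¹ * MvPolynomial.X (k + 1)) = a (k + 2 + β₁ - 1) / (β₁ - m) := by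
    simp [d, Nat.cast_sub hmβ.le, div_eq_inv_mul, show k + 2 + β₁ - 1 = β₁ + (k + 1) by omega]
  rw [coeff_eq_aeval_genericInvCoeff hmβ hT0 hT1 hT hB0 hBT, ← add_sub_cancel_right
    (genericInvCoeff d (k + 2)) (MvPolynomial.C (d : ℚ)⁻¹ * MvPolynomial.X (k + 1)), ← hP,
    map_sub, hlead, neg_div, sub_eq_neg_add]

/-- **Lemma (in the proof of Proposition 4.2).**  Let `m < β₁` be positive integers and let
`(a_j)_{j ≥ β₁+1}` be real numbers.  Let `t̃(t) = t + Σ_{k≥2} c_k t^k` be the unique formal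
power series with leading term `t` such that
`t̃(t)^{β₁−m} = t^{β₁−m} + Σ_{j=β₁+1}^∞ a_j t^{j−m}`, and let `t(t̃) = t̃ + Σ_{k≥2} b_k t̃^k` be
its compositional inverse.  Then for every `k ≥ 2` there is a polynomial `P_k` with rational
coefficients, depending only on `k`, `m`, `β₁`, in the variables `a_{β₁+1}, …, a_{k+β₁−2}`
(variable `j` standing for `a_{β₁+j}`), all of whose monomials
`(a_{β₁+j₁})^{α₁} ⋯ (a_{β₁+j_r})^{α_r}` satisfy `α₁j₁ + ⋯ + α_r j_r = k − 1`, such that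
`b_k = −a_{k+β₁−1}/(β₁−m) + P_k(a_{β₁+1}, …, a_{k+β₁−2})`. -/
theorem lemma_prop42_inverse_series_coefficients
    (m β₁ : ℕ) (hm : 1 ≤ m) (hmβ : m < β₁) (k : ℕ) (hk : 2 ≤ k) :
    ∃ P : MvPolynomial ℕ ℚ,
      (∀ d ∈ P.support, ∀ j ∈ d.support, 1 ≤ j ∧ j ≤ k - 2) ∧
      (∀ d ∈ P.support, (d.sum fun j α => j * α) = k - 1) ∧
      ∀ (a : ℕ → ℝ) (T B : PowerSeries ℝ),
        PowerSeries.coeff 0 T = 0 →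
        PowerSeries.coeff 1 T = 1 →
        T ^ (β₁ - m) =
          PowerSeries.mk (fun n => if n = β₁ - m then 1
            else if β₁ < n + m then a (n + m) else 0) →
        PowerSeries.coeff 0 B = 0 →
        pscomp B T = PowerSeries.X →
        pscomp T B = PowerSeries.X →
        PowerSeries.coeff k B =
          - a (k + β₁ - 1) / ((β₁ : ℝ) - (m : ℝ)) +
            MvPolynomial.aeval (fun j => a (β₁ + j)) P :=
  lemma_prop42_inverse_series_coefficients_general m β₁ hmβ k hk
end

section
/- Let m, β_1 be integers with 1 ≤ m < β_1 < 2m, and let φ(t) = Σ_{j≥β_1} a_j t^j be a formal real power series with A_1 := a_{β_1} ≠ 0. Let β_1 < β_2 < ⋯ < β_q be integers and set e_0 = m, e_i = gcd(e_{i−1}, β_i); assume that for each i = 1, …, q one has e_{i−1} ∤ β_i and that every j < β_i with a_j ≠ 0 is divisible by e_{i−1} (so β_1, …, β_q are characteristic exponents of the support of φ relative to m). Let t̃(t) = t + O(t²) be the unique formal power series with t̃(t)^{β_1−m} = φ(t)/(A_1 t^m), and let τ(t̃) be its compositional inverse. Then for every i = 2, …, q, the coefficient of t̃^{β_i − β_1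 + m} in the power series τ(t̃)^m equals −m·a_{β_i}/((β_1 − m)·A_1). (The key computation in the proof of Proposition 4.2, case (ii), of the paper: it expresses the characteristic coefficients of the strict transform of a demi-branch under blow-up in terms of the original characteristic coefficients.) -/
/-!
Write `T = X·T'` and `τ = X·σ`, and let `d = e (i-1)`, so that `d` divides `β 1` but not
`K = β i - β 1`; put `p = β 1 - m`. If a series `f` with `f(0) = 1` has, below degree `j`,
only monomials of degree divisible by `d`, and `d ∤ j`, then in `f^p` all cross terms of
degree `j` vanish and `coeff j (f^p) = p · coeff j f`. Since below degree `K` the series `T'^p`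
only has such monomials, so has `T'`, and `p · coeff K T' = a (β i) / a (β 1)`. The same
cross-term argument applied to `T ∘ τ = X` shows that `σ` inherits the divisibility pattern of
`T'` below `K` and that `coeff K σ = - coeff K T'`. Finally
`coeff (K + m) (τ^m) = coeff K (σ^m) = m · coeff K σ`.
-/

open PowerSeries Finset

namespace PowerSeries

variable {R : Type*} [CommSemiring R]

def DvdSupportedBelow (d j : ℕ) (f : R⟦X⟧) : Prop :=
  ∀ n < j, coeff n f ≠ 0 → d ∣ n

namespace DvdSupportedBelow

variable {d j : ℕ} {f g : R⟦X⟧}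

theorem mono {k : ℕ} (hf : DvdSupportedBelow d j f) (hk : k ≤ j) : DvdSupportedBelow d k f :=
  fun n hn => hf n (hn.trans_le hk)

theorem one : DvdSupportedBelow d j (1 : R⟦X⟧) := by
  intro n _ h
  rw [coeff_one] at h
  split_ifs at h with hn
  · exact hn ▸ dvd_zero d
  · exact absurd rfl h

theorem mul (hf : DvdSupportedBelow d j f) (hg : DvdSupportedBelow d j g) :
    DvdSupportedBelow d j (f * g) := by
  intro n hn h
  obtain ⟨⟨u, v⟩, huv, hne⟩ := exists_ne_zero_of_sum_ne_zero (coeff_mul n f g ▸ h)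
  rw [HasAntidiagonal.mem_antidiagonal] at huv
  subst huv
  exact dvd_add (hf u (by omega) (left_ne_zero_of_mul hne))
    (hg v (by omega) (right_ne_zero_of_mul hne))

theorem pow (hf : DvdSupportedBelow d j f) (k : ℕ) : DvdSupportedBelow d j (f ^ k) := by
  induction k with
  | zero => exact pow_zero f ▸ one
  | succ k ih => exact (pow_succ f k).symm ▸ ih.mul hf

end DvdSupportedBelow

variable {d j : ℕ} {f g : R⟦X⟧}

theorem coeff_mul_of_dvdSupportedBelow (hf : DvdSupportedBelow d j f)
    (hg : DvdSupportedBelow d j g) (hj : ¬ d ∣ j) :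
    coeff j (f * g) = coeff j f * coeff 0 g + coeff 0 f * coeff j g := by
  have hj0 : j ≠ 0 := by rintro rfl; exact hj (dvd_zero d)
  rw [coeff_mul, sum_eq_add_of_mem (j, 0) (0, j) (by simp) (by simp) (by simp [hj0])]
  rintro ⟨u, v⟩ huv ⟨hu, hv⟩
  rw [HasAntidiagonal.mem_antidiagonal] at huv
  simp only [ne_eq, Prod.mk.injEq] at hu hv
  by_contra hne
  exact hj (huv ▸ dvd_add (hf u (by omega) (left_ne_zero_of_mul hne))
    (hg v (by omega) (right_ne_zero_of_mul hne)))

theorem coeff_pow_of_dvdSupportedBelow (h0 : constantCoeff f = 1)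
    (hf : DvdSupportedBelow d j f) (hj : ¬ d ∣ j) (p : ℕ) :
    coeff j (f ^ p) = p * coeff j f := by
  induction p with
  | zero => simp [coeff_one, show j ≠ 0 by rintro rfl; exact hj (dvd_zero d)]
  | succ p ih =>
    rw [pow_succ, coeff_mul_of_dvdSupportedBelow (hf.pow p) hf hj, ih,
      coeff_zero_eq_constantCoeff_apply, coeff_zero_eq_constantCoeff_apply, map_pow, h0]
    push_cast
    ring

theorem DvdSupportedBelow.of_pow [NoZeroDivisors R] {p : ℕ} (hp : (p : R) ≠ 0)
    (h0 : constantCoeff f = 1) (hfp : DvdSupportedBelow d j (f ^ p)) :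
    DvdSupportedBelow d j f := by
  intro n hn
  induction n using Nat.strong_induction_on with
  | _ n ih =>
  intro hne
  by_contra hdn
  have hbelow : DvdSupportedBelow d n f := fun k hk => ih k hk (hk.trans hn)
  refine hdn (hfp n hn ?_)
  rw [coeff_pow_of_dvdSupportedBelow h0 hbelow hdn]
  exact mul_ne_zero hp hne

section Inverse

variable {F G : ℝ⟦X⟧}

theorem coeff_succ_pscomp_X_mul (F G : ℝ⟦X⟧) (n : ℕ) :
    coeff (n + 1) (pscomp (X * F) (X * G)) =
      ∑ k ∈ range (n + 1), coeff k F * coeff (n - k) (G ^ (k + 1)) := by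
  rw [pscomp, coeff_mk, sum_range_succ', coeff_zero_X_mul, zero_mul, add_zero]
  refine sum_congr rfl fun k hk => ?_
  have hkn := mem_range.mp hk
  rw [coeff_succ_X_mul, mul_pow, show n + 1 = (n - k) + (k + 1) by omega, coeff_X_pow_mul]

theorem constantCoeff_eq_one_of_pscomp_X_mul_eq_X (hcomp : pscomp (X * F) (X * G) = X)
    (hF : constantCoeff F = 1) : constantCoeff G = 1 := by
  have h := congrArg (coeff (0 + 1)) hcomp
  rw [coeff_succ_pscomp_X_mul] at h
  simpa [hF] using h

theorem coeff_add_coeff_eq_zero_of_pscomp_X_mul_eq_X (hcomp : pscomp (X * F) (X * G) = X)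
    (hF : constantCoeff F = 1) (hG : constantCoeff G = 1) {d n : ℕ} (hn : ¬ d ∣ n)
    (hFd : DvdSupportedBelow d n F) (hGd : DvdSupportedBelow d n G) :
    coeff n G + coeff n F = 0 := by
  have hn0 : n ≠ 0 := by rintro rfl; exact hn (dvd_zero d)
  have h := congrArg (coeff (n + 1)) hcomp
  rw [coeff_succ_pscomp_X_mul, coeff_X, if_neg (by omega),
    sum_eq_add_of_mem 0 n (by simp) (by simp) (Ne.symm hn0)] at h
  · simpa [hF, hG] using h
  rintro k hk ⟨hk0, hkn⟩
  have hkn' := mem_range.mp hk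
  by_contra hne
  refine hn ?_
  have := dvd_add (hFd k (by omega) (left_ne_zero_of_mul hne))
    (hGd.pow (k + 1) (n - k) (by omega) (right_ne_zero_of_mul hne))
  rwa [Nat.add_sub_cancel' (by omega)] at this

theorem DvdSupportedBelow.of_pscomp_X_mul_eq_X (hcomp : pscomp (X * F) (X * G) = X)
    (hF : constantCoeff F = 1) (hG : constantCoeff G = 1) {d j : ℕ}
    (hFd : DvdSupportedBelow d j F) : DvdSupportedBelow d j G := by
  intro n hn
  induction n using Nat.strong_induction_on with
  | _ n ih =>
  intro hne
  by_contra hdn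
  have hGn : DvdSupportedBelow d n G := fun k hk => ih k hk (hk.trans hn)
  have h := coeff_add_coeff_eq_zero_of_pscomp_X_mul_eq_X hcomp hF hG hdn (hFd.mono hn.le) hGn
  exact hdn (hFd n hn fun hFn => hne (by rwa [hFn, add_zero] at h))

end Inverse

end PowerSeries

theorem dvd_of_gcd_chain {q : ℕ} {β e : ℕ → ℕ}
    (he : ∀ i, 1 ≤ i → i ≤ q → e i = Nat.gcd (e (i - 1)) (β i)) {k : ℕ} (hk : 1 ≤ k)
    (hkq : k ≤ q) : e k ∣ β 1 := by
  induction k, hk using Nat.le_induction with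
  | base => exact he 1 le_rfl hkq ▸ Nat.gcd_dvd_right _ _
  | succ k hk ih =>
    rw [he (k + 1) (by omega) hkq, Nat.add_sub_cancel]
    exact (Nat.gcd_dvd_left _ _).trans (ih (by omega))

theorem strictMonoOn_Icc_of_lt_add_one {α : Type*} [Preorder α] {β : ℕ → α} {q : ℕ}
    (h : ∀ i, 1 ≤ i → i < q → β i < β (i + 1)) : StrictMonoOn β (Set.Icc 1 q) :=
  strictMonoOn_of_lt_succ Set.ordConnected_Icc fun k _ hk hk' => by
    rw [Order.succ_eq_add_one] at hk' ⊢
    exact h k hk.1 hk'.2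

theorem prop42_case_ii_key_computation_general
    (m : ℕ) (q : ℕ) (β e : ℕ → ℕ) (a : ℕ → ℝ)
    (hβ₁ : m < β 1)
    (hmono : ∀ i, 1 ≤ i → i < q → β i < β (i + 1))
    (he : ∀ i, 1 ≤ i → i ≤ q → e i = Nat.gcd (e (i - 1)) (β i))
    (hnd : ∀ i, 1 ≤ i → i ≤ q → ¬ e (i - 1) ∣ β i)
    (hdiv : ∀ i, 1 ≤ i → i ≤ q → ∀ j < β i, a j ≠ 0 → e (i - 1) ∣ j)
    (hA₁ : a (β 1) ≠ 0)
    (T τ : PowerSeries ℝ)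
    (hT0 : PowerSeries.coeff 0 T = 0) (hT1 : PowerSeries.coeff 1 T = 1)
    (hTpow : T ^ (β 1 - m) = PowerSeries.mk (fun n => a (n + m) / a (β 1)))
    (hτ0 : PowerSeries.coeff 0 τ = 0)
    (hinv₂ : pscomp T τ = PowerSeries.X) :
    ∀ i, 2 ≤ i → i ≤ q →
      PowerSeries.coeff (β i - β 1 + m) (τ ^ m) =
        - (m : ℝ) * a (β i) / (((β 1 : ℝ) - (m : ℝ)) * a (β 1)) := by
  intro i hi2 hiq
  obtain ⟨T', rfl⟩ := X_dvd_iff.mpr (by simpa using hT0)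
  obtain ⟨σ, rfl⟩ := X_dvd_iff.mpr (by simpa using hτ0)
  have hT' : constantCoeff T' = 1 := by simpa using hT1
  have hσ := constantCoeff_eq_one_of_pscomp_X_mul_eq_X hinv₂ hT'
  set d := e (i - 1)
  have hdβ₁ : d ∣ β 1 := dvd_of_gcd_chain he (by omega) (by omega)
  have hβi : β 1 < β i :=
    strictMonoOn_Icc_of_lt_add_one hmono ⟨le_rfl, by omega⟩ ⟨by omega, hiq⟩ (by omega)
  set K := β i - β 1
  have hβiK : β i = β 1 + K := by omega
  have hdK : ¬ d ∣ K := fun h => hnd i (by omega) hiq (hβiK ▸ dvd_add hdβ₁ h)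
  set p := β 1 - m
  have hT'pow : ∀ j, coeff j (T' ^ p) = a (β 1 + j) / a (β 1) := fun j => by
    have := congrArg (coeff (j + p)) hTpow
    rwa [mul_pow, coeff_X_pow_mul, coeff_mk, show j + p + m = β 1 + j by omega] at this
  have hp : (p : ℝ) ≠ 0 := Nat.cast_ne_zero.mpr (by omega)
  have hT'd : DvdSupportedBelow d K T' := by
    refine .of_pow hp hT' fun j hj hne => ?_
    rw [hT'pow, div_ne_zero_iff] at hne
    exact (Nat.dvd_add_right hdβ₁).mp (hdiv i (by omega) hiq _ (by omega) hne.1)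
  have hσd := hT'd.of_pscomp_X_mul_eq_X hinv₂ hT' hσ
  have hσK := coeff_add_coeff_eq_zero_of_pscomp_X_mul_eq_X hinv₂ hT' hσ hdK hT'd hσd
  have hT'K : a (β i) = p * coeff K T' * a (β 1) := by
    rw [← coeff_pow_of_dvdSupportedBelow hT' hT'd hdK, hT'pow, ← hβiK,
      div_mul_cancel₀ _ hA₁]
  rw [show β i - β 1 + m = K + m by omega, mul_pow, coeff_X_pow_mul,
    coeff_pow_of_dvdSupportedBelow hσ hσd hdK, ← Nat.cast_sub hβ₁.le,
    eq_div_iff (mul_ne_zero hp hA₁)]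
  linear_combination (m * p * a (β 1) : ℝ) * hσK + (m : ℝ) * hT'K

/-- **Key computation in the proof of Proposition 4.2, case (ii).**  Let `1 ≤ m < β₁ < 2m`, let
`φ(t) = Σ_{j≥β₁} a_j t^j` be a formal real power series with `A₁ = a (β 1) ≠ 0` (`β 1 = β₁`),
and let `β 1 < β 2 < ⋯ < β q` with `e 0 = m`, `e i = gcd (e (i−1)) (β i)`, `e (i−1) ∤ β i`, and
every exponent of the support of `φ` below `β i` divisible by `e (i−1)` — so the `β i` are
characteristic exponents of the support of `φ` relative to `m`.  Let `t̃(t) = t + O(t²)` be the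
unique formal power series with `t̃(t)^{β₁−m} = φ(t)/(A₁ t^m)`, i.e. with coefficients
`n ↦ a (n+m)/A₁`, and let `τ` be its compositional inverse.  Then for `2 ≤ i ≤ q`, the
coefficient of `t̃^{β i − β 1 + m}` in `τ(t̃)^m` equals `−m·a (β i)/((β₁−m)·A₁)`. -/
theorem prop42_case_ii_key_computation
    (m : ℕ) (hm : 1 ≤ m) (q : ℕ) (β e : ℕ → ℕ) (a : ℕ → ℝ)
    (hβ₁ : m < β 1) (hβ₁' : β 1 < 2 * m)
    (hmono : ∀ i, 1 ≤ i → i < q → β i < β (i + 1))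
    (he0 : e 0 = m)
    (he : ∀ i, 1 ≤ i → i ≤ q → e i = Nat.gcd (e (i - 1)) (β i))
    (hnd : ∀ i, 1 ≤ i → i ≤ q → ¬ e (i - 1) ∣ β i)
    (hdiv : ∀ i, 1 ≤ i → i ≤ q → ∀ j < β i, a j ≠ 0 → e (i - 1) ∣ j)
    (hlow : ∀ j < β 1, a j = 0)
    (hA₁ : a (β 1) ≠ 0)
    (T τ : PowerSeries ℝ)
    (hT0 : PowerSeries.coeff 0 T = 0) (hT1 : PowerSeries.coeff 1 T = 1)
    (hTpow : T ^ (β 1 - m) = PowerSeries.mk (fun n => a (n + m) / a (β 1)))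
    (hτ0 : PowerSeries.coeff 0 τ = 0)
    (hinv₁ : pscomp τ T = PowerSeries.X) (hinv₂ : pscomp T τ = PowerSeries.X) :
    ∀ i, 2 ≤ i → i ≤ q →
      PowerSeries.coeff (β i - β 1 + m) (τ ^ m) =
        - (m : ℝ) * a (β i) / (((β 1 : ℝ) - (m : ℝ)) * a (β 1)) :=
  prop42_case_ii_key_computation_general m q β e a hβ₁ hmono he hnd hdiv hA₁ T τ hT0 hT1 hTpow hτ0
    hinv₂
end

section
/- Let γ_1, γ_2 be tangent reduced real analytic demi-branches at 0 ∈ ℝ², presented in common coordinates (x,y) as γ_i(t) = (φ_i(t), t^{m_i}), and let γ'_i(t) = (φ'_i(t), t^{m_i}) be presentations of the same demi-branches in another coordinate system, i.e. γ'_i = Ψ ∘ γ_i ∘ σ_i where Ψ is a real analytic diffeomorphism germ of (ℝ²,0) and σ_i are real analytic diffeomorphism germs of (ℝ,0) with σ_i'(0) > 0. Then O(γ'_1, γ'_2) = O(γ_1, γ_2): the contact order between two real analytic demi-branches is well defined, independent of their Puiseux presentations. -/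
/-!
With `M = lcm m₁ m₂`, `kᵢ = M / mᵢ` and `Aᵢ(s) = φᵢ(s^kᵢ)`, both branches become
`s ↦ (Aᵢ(s), s^M)` and the contact order is `N / M`, where `N` is the order of the convergent
series `A₁ - A₂`, characterised by `|A₁ - A₂|(s) ≍ s^N` as `s → 0⁺`.

In the new coordinates `(A'ᵢ(s), s^M) = Ψ(Aᵢ(τᵢ s), (τᵢ s)^M)` with `τᵢ(s) = σᵢ(s^kᵢ)^{1/kᵢ} ≍ s`.
Each `Aᵢ` is Lipschitz in the height `y = s^M`, so the horizontal gap `|A₁ - A₂|` at a height is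
comparable to the distance from the point of the first branch to any point of the second one;
and `Ψ` is bi-Lipschitz near `0`. Comparing `(A'₁(s), s^M)` with `(A'₂(s), s^M)`, and, through a
local inverse of `τ₂`, `(A₁(τ₁ s), ·)` with `(A₂(τ₁ s), ·)`, gives
`|A'₁ - A'₂|(s) ≍ |A₁ - A₂|(τ₁ s) ≍ s^N`.
-/

open Filter Topology

/-- `φ` is, near `0`, the sum of the convergent real power series with coefficients `a`. -/
def HasPS (a : ℕ → ℝ) (φ : ℝ → ℝ) : Prop :=
  ∃ r > (0 : ℝ), ∀ t : ℝ, |t| < r → HasSum (fun j => a j * t ^ j) (φ t)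

/-- `(m, a)` is the coefficient data of a presentation `γ(t) = (φ(t), t^m)`, `t ≥ 0`,
of a reduced real analytic demi-branch at `0 ∈ ℝ²`. -/
def IsPres (m : ℕ) (a : ℕ → ℝ) : Prop :=
  0 < m ∧ (∀ j < m, a j = 0) ∧ ∀ d : ℕ, d ∣ m → (∀ j, a j ≠ 0 → d ∣ j) → d = 1

/-- Two demi-branches are tangent if they have the same unit tangent direction at the origin. -/
def Tangent (γ₁ γ₂ : ℝ → ℝ × ℝ) : Prop :=
  ∃ v : ℝ × ℝ,
    Tendsto (fun t => ‖γ₁ t‖⁻¹ • γ₁ t) (𝓝[>] (0 : ℝ)) (𝓝 v) ∧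
    Tendsto (fun t => ‖γ₂ t‖⁻¹ • γ₂ t) (𝓝[>] (0 : ℝ)) (𝓝 v)

/-- Coefficients of `t ↦ φ(t^k)` in terms of those of `φ`. -/
def stretch (k : ℕ) (a : ℕ → ℝ) : ℕ → ℝ := fun j => if k ∣ j then a (j / k) else 0

/-- The contact order `O(γ₁,γ₂) = (1/M)·ord_s (φ₁(s^{M/m₁}) − φ₂(s^{M/m₂}))`, `M = lcm m₁ m₂`,
of two demi-branches `γᵢ(t) = (φᵢ(t), t^{mᵢ})` presented in the same coordinates. -/
noncomputable def contactOrd (m₁ m₂ : ℕ) (a₁ a₂ : ℕ → ℝ) : ℚ :=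
  ((sInf {j : ℕ | stretch (Nat.lcm m₁ m₂ / m₁) a₁ j ≠ stretch (Nat.lcm m₁ m₂ / m₂) a₂ j} : ℕ) : ℚ)
    / (Nat.lcm m₁ m₂ : ℚ)


open Asymptotics

lemma Asymptotics.IsTheta.comp_tendsto {α β E F : Type*} [Norm E] [Norm F] {l : Filter α}
    {l' : Filter β} {f : α → E} {g : α → F} (h : f =Θ[l] g) {k : β → α} (hk : Tendsto k l' l) :
    (f ∘ k) =Θ[l'] (g ∘ k) :=
  ⟨h.1.comp_tendsto hk, h.2.comp_tendsto hk⟩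

lemma not_pow_isBigO_of_eventuallyEq_zero {f : ℝ → ℝ} (hf : f =ᶠ[𝓝[>] 0] 0) (N : ℕ) :
    ¬ (fun x : ℝ => x ^ N) =O[𝓝[>] 0] f := fun hO => by
  obtain ⟨x, hx, hx0⟩ := ((isBigO_zero_right_iff.1 (hO.trans_eventuallyEq hf)).and
    self_mem_nhdsWithin).exists
  exact pow_ne_zero N (ne_of_gt hx0) hx

lemma eq_of_pow_isTheta_pow {m n : ℕ}
    (h : (fun x : ℝ => x ^ m) =Θ[𝓝[>] 0] (fun x => x ^ n)) : m = n := by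
  have key : ∀ {m n : ℕ}, m < n → ¬ (fun x : ℝ => x ^ m) =O[𝓝[>] 0] (fun x => x ^ n) := by
    intro m n hmn hO
    have hne : ∀ᶠ x : ℝ in 𝓝[>] 0, x ^ m ≠ 0 := by
      filter_upwards [self_mem_nhdsWithin] with x hx using pow_ne_zero _ (ne_of_gt hx)
    exact isLittleO_irrefl hne.frequently
      (hO.trans_isLittleO ((isLittleO_pow_pow hmn).mono nhdsWithin_le_nhds))
  rcases lt_trichotomy m n with hmn | rfl | hmn
  · exact absurd h.1 (key hmn)
  · rfl
  · exact absurd h.2 (key hmn)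

lemma tendsto_pow_nhdsGT_zero {k : ℕ} (hk : k ≠ 0) :
    Tendsto (fun s : ℝ => s ^ k) (𝓝[>] 0) (𝓝[>] 0) :=
  tendsto_nhdsWithin_iff.2 ⟨((continuous_pow k).tendsto' 0 0 (zero_pow hk)).mono_left
    nhdsWithin_le_nhds, by
      filter_upwards [self_mem_nhdsWithin] with s hs using pow_pos (Set.mem_Ioi.1 hs) k⟩

lemma HasSum.abs_le_mul_pow {b : ℕ → ℝ} {ρ t S : ℝ} {N : ℕ} (hS : HasSum (fun j => b j * t ^ j) S)
    (hρ : 0 < ρ) (hsum : Summable fun j => |b j| * ρ ^ j) (hb : ∀ j < N, b j = 0) (ht : |t| ≤ ρ) :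
    |S| ≤ (∑' j, |b j| * ρ ^ j) / ρ ^ N * |t| ^ N := by
  have hterm : ∀ j, ‖b j * t ^ j‖ ≤ |b j| * ρ ^ j / ρ ^ N * |t| ^ N := by
    intro j
    rcases lt_or_ge j N with hj | hj
    · simp only [hb j hj, zero_mul, norm_zero]
      positivity
    · obtain ⟨i, rfl⟩ := Nat.exists_eq_add_of_le hj
      calc ‖b (N + i) * t ^ (N + i)‖ = |b (N + i)| * |t| ^ N * |t| ^ i := by
            rw [Real.norm_eq_abs, abs_mul, abs_pow, pow_add]; ring
        _ ≤ |b (N + i)| * |t| ^ N * ρ ^ i := by gcongr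
        _ = |b (N + i)| * ρ ^ (N + i) / ρ ^ N * |t| ^ N := by field_simp; ring
  have hmaj : Summable fun j => |b j| * ρ ^ j / ρ ^ N * |t| ^ N :=
    (hsum.div_const _).mul_right _
  calc |S| = ‖∑' j, b j * t ^ j‖ := by rw [hS.tsum_eq, Real.norm_eq_abs]
    _ ≤ ∑' j, |b j| * ρ ^ j / ρ ^ N * |t| ^ N := tsum_of_norm_bounded hmaj.hasSum hterm
    _ = (∑' j, |b j| * ρ ^ j) / ρ ^ N * |t| ^ N := by rw [tsum_mul_right, tsum_div_const]

lemma pow_sub_pow_le_mul_pow_sub_pow {s t : ℝ} (hs : 0 ≤ s) (hst : s ≤ t) {M j : ℕ}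
    (hM : 0 < M) (hMj : M ≤ j) :
    t ^ j - s ^ j ≤ j * t ^ (j - M) * (t ^ M - s ^ M) := by
  have ht : 0 ≤ t := hs.trans hst
  have hts : 0 ≤ t - s := sub_nonneg.2 hst
  have hj : ∑ i ∈ Finset.range j, t ^ i * s ^ (j - 1 - i) ≤ j * t ^ (j - 1) := by
    calc ∑ i ∈ Finset.range j, t ^ i * s ^ (j - 1 - i)
        ≤ ∑ i ∈ Finset.range j, t ^ (j - 1) := by
          refine Finset.sum_le_sum fun i hi => ?_
          rw [Finset.mem_range] at hi
          calc t ^ i * s ^ (j - 1 - i) ≤ t ^ i * t ^ (j - 1 - i) := by gcongr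
            _ = t ^ (j - 1) := by rw [← pow_add]; congr 1; omega
      _ = j * t ^ (j - 1) := by simp
  have hM' : t ^ (M - 1) ≤ ∑ i ∈ Finset.range M, t ^ i * s ^ (M - 1 - i) := by
    simpa using Finset.single_le_sum (f := fun i => t ^ i * s ^ (M - 1 - i))
      (fun i _ => by positivity) (Finset.mem_range.2 (Nat.sub_lt hM one_pos))
  rw [← geom_sum₂_mul, ← geom_sum₂_mul]
  calc (∑ i ∈ Finset.range j, t ^ i * s ^ (j - 1 - i)) * (t - s)
      ≤ j * t ^ (j - 1) * (t - s) := by gcongr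
    _ = j * t ^ (j - M) * (t ^ (M - 1) * (t - s)) := by
      rw [show j - 1 = j - M + (M - 1) by omega, pow_add]; ring
    _ ≤ j * t ^ (j - M) * ((∑ i ∈ Finset.range M, t ^ i * s ^ (M - 1 - i)) * (t - s)) := by
      gcongr

lemma abs_mul_pow_sub_pow_le {c ρ K s t : ℝ} {M j : ℕ} (hρ : 0 < ρ) (hM : 0 < M) (hMj : M ≤ j)
    (hc : |c| * ρ ^ j ≤ K) (hs : 0 ≤ s) (hst : s ≤ t) (ht : t ≤ ρ / 2) :
    ‖c * (t ^ j - s ^ j)‖ ≤ K / (ρ / 2) ^ M * (j * (1 / 2) ^ j) * (t ^ M - s ^ M) := by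
  have ht0 : 0 ≤ t := hs.trans hst
  have hMst : 0 ≤ t ^ M - s ^ M := sub_nonneg.2 (by gcongr)
  have hρj : (ρ / 2) ^ (j - M) = ρ ^ j * (1 / 2) ^ j / (ρ / 2) ^ M := by
    rw [eq_div_iff (by positivity), ← pow_add, Nat.sub_add_cancel hMj, ← mul_pow]
    ring
  calc ‖c * (t ^ j - s ^ j)‖ ≤ |c| * (j * t ^ (j - M) * (t ^ M - s ^ M)) := by
        rw [Real.norm_eq_abs, abs_mul, abs_of_nonneg (sub_nonneg.2 (by gcongr))]
        gcongr
        exact pow_sub_pow_le_mul_pow_sub_pow hs hst hM hMj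
    _ ≤ |c| * (j * (ρ / 2) ^ (j - M) * (t ^ M - s ^ M)) := by gcongr
    _ = |c| * ρ ^ j / (ρ / 2) ^ M * (j * (1 / 2) ^ j) * (t ^ M - s ^ M) := by rw [hρj]; ring
    _ ≤ K / (ρ / 2) ^ M * (j * (1 / 2) ^ j) * (t ^ M - s ^ M) := by gcongr

lemma stretch_eq_zero_of_lt {a : ℕ → ℝ} {m k M : ℕ} (ha : ∀ j < m, a j = 0) (hkm : k * m = M) :
    ∀ j < M, stretch k a j = 0 := by
  intro j hj
  subst hkm
  rcases Nat.eq_zero_or_pos k with rfl | hk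
  · simp at hj
  by_cases hkj : k ∣ j
  · obtain ⟨c, rfl⟩ := hkj
    simp [stretch, Nat.mul_div_cancel_left c hk, ha c (Nat.lt_of_mul_lt_mul_left hj)]
  · simp [stretch, hkj]

namespace HasPS

variable {a b b' b₁ b₂ : ℕ → ℝ} {φ ψ ψ' ψ₁ ψ₂ : ℝ → ℝ}

lemma exists_summable (h : HasPS b ψ) :
    ∃ ρ > 0, Summable (fun j => |b j| * ρ ^ j) ∧
      ∀ t, |t| ≤ ρ → HasSum (fun j => b j * t ^ j) (ψ t) := by
  obtain ⟨r, hr, hsum⟩ := h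
  have hr2 : |r / 2| < r := by rw [abs_of_pos (half_pos hr)]; linarith
  refine ⟨r / 2, half_pos hr, ?_, fun t ht => hsum t (by linarith)⟩
  simpa [abs_mul, abs_pow, abs_of_pos (half_pos hr)] using (hsum _ hr2).summable.abs

lemma sub (h₁ : HasPS b₁ ψ₁) (h₂ : HasPS b₂ ψ₂) :
    HasPS (fun j => b₁ j - b₂ j) (fun t => ψ₁ t - ψ₂ t) := by
  obtain ⟨r₁, hr₁, hs₁⟩ := h₁
  obtain ⟨r₂, hr₂, hs₂⟩ := h₂
  refine ⟨min r₁ r₂, lt_min hr₁ hr₂, fun t ht => ?_⟩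
  simpa only [sub_mul] using (hs₁ t (ht.trans_le (min_le_left _ _))).sub
    (hs₂ t (ht.trans_le (min_le_right _ _)))

lemma single (N : ℕ) (c : ℝ) : HasPS (Pi.single N c) (fun t => c * t ^ N) := by
  refine ⟨1, one_pos, fun t _ => ?_⟩
  convert hasSum_pi_single N (c * t ^ N) using 1
  ext j
  rcases eq_or_ne j N with rfl | hj <;> simp [*]

lemma comp_pow (h : HasPS a φ) {k : ℕ} (hk : 0 < k) :
    HasPS (stretch k a) (fun s => φ (s ^ k)) := by
  obtain ⟨r, hr, hsum⟩ := h
  refine ⟨min r 1, lt_min hr one_pos, fun s hs => ?_⟩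
  have hsk : |s ^ k| < r := by
    rw [abs_pow]
    calc |s| ^ k ≤ |s| := pow_le_of_le_one (abs_nonneg s) (hs.le.trans (min_le_right _ _)) hk.ne'
      _ < r := hs.trans_le (min_le_left _ _)
  have hzero : ∀ j ∉ Set.range (k * ·), stretch k a j * s ^ j = 0 := by
    intro j hj
    have hkj : ¬ k ∣ j := fun ⟨c, hc⟩ => hj ⟨c, hc.symm⟩
    simp [stretch, hkj]
  refine ((mul_right_injective₀ hk.ne').hasSum_iff hzero).1 ?_
  convert hsum _ hsk using 2 with j
  simp [stretch, Nat.mul_div_cancel_left j hk, pow_mul]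

lemma isBigO_pow (h : HasPS b ψ) {N : ℕ} (hb : ∀ j < N, b j = 0) : ψ =O[𝓝 0] (· ^ N) := by
  obtain ⟨ρ, hρ, hsum, hrep⟩ := h.exists_summable
  refine .of_bound ((∑' j, |b j| * ρ ^ j) / ρ ^ N) ?_
  filter_upwards [Metric.closedBall_mem_nhds 0 hρ] with t ht
  rw [mem_closedBall_zero_iff, Real.norm_eq_abs] at ht
  rw [Real.norm_eq_abs, Real.norm_eq_abs, abs_pow]
  exact (hrep t ht).abs_le_mul_pow hρ hsum hb ht

lemma tendsto_mk_pow (h : HasPS b ψ) (hb : b 0 = 0) {M : ℕ} (hM : M ≠ 0) :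
    Tendsto (fun u => (ψ u, u ^ M)) (𝓝[>] 0) (𝓝 0) := by
  have hψ : Tendsto ψ (𝓝 0) (𝓝 0) :=
    (h.isBigO_pow (N := 1) fun j hj => by rwa [Nat.lt_one_iff.1 hj]).trans_tendsto
      ((continuous_pow 1).tendsto' 0 0 (zero_pow one_ne_zero))
  simpa only [Prod.mk_zero_zero] using
    (hψ.prodMk_nhds ((continuous_pow M).tendsto' 0 0 (zero_pow hM))).mono_left nhdsWithin_le_nhds

lemma isTheta_pow_sInf (h : HasPS b ψ) (hb : ∃ j, b j ≠ 0) :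
    ψ =Θ[𝓝 0] (· ^ sInf {j | b j ≠ 0}) := by
  set N := sInf {j | b j ≠ 0}
  have hN : b N ≠ 0 := Nat.sInf_mem hb
  have hrem : (fun t => ψ t - b N * t ^ N) =O[𝓝 0] (· ^ (N + 1)) := by
    refine (h.sub (single N (b N))).isBigO_pow fun j hj => ?_
    rcases (Nat.lt_succ_iff.1 hj).lt_or_eq with hj | rfl
    · have : b j = 0 := not_not.1 (Nat.notMem_of_lt_sInf hj)
      simp [this, hj.ne]
    · simp
  have hlead : (fun t => b N * t ^ N) =Θ[𝓝 0] (· ^ N) :=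
    (isTheta_const_mul_left hN).2 (isTheta_refl _ _)
  have hsplit : (fun t => b N * t ^ N) + (fun t => ψ t - b N * t ^ N) = ψ := by ext t; simp
  rw [← hsplit]
  exact hlead.add_isLittleO (hrem.trans_isLittleO (isLittleO_pow_pow N.lt_succ_self))

lemma eventually_eq_zero (h : HasPS b ψ) (hb : ∀ j, b j = 0) : ψ =ᶠ[𝓝 0] 0 := by
  obtain ⟨r, hr, hsum⟩ := h
  filter_upwards [Metric.ball_mem_nhds 0 hr] with t ht
  exact (hsum t (by simpa using ht)).unique (by simp [hb])

lemma sInf_eq_of_isTheta (h : HasPS b ψ) {N : ℕ} (hψ : ψ =Θ[𝓝[>] 0] (· ^ N)) :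
    sInf {j | b j ≠ 0} = N := by
  have hb : ∃ j, b j ≠ 0 := by
    by_contra! hb
    exact not_pow_isBigO_of_eventuallyEq_zero
      (nhdsWithin_le_nhds (h.eventually_eq_zero hb)) N hψ.2
  exact eq_of_pow_isTheta_pow (((h.isTheta_pow_sInf hb).mono nhdsWithin_le_nhds).symm.trans hψ)

lemma eq_zero_of_eventuallyEq_zero (h : HasPS b ψ) (hψ : ψ =ᶠ[𝓝[>] 0] 0) (j : ℕ) : b j = 0 := by
  by_contra hj
  exact not_pow_isBigO_of_eventuallyEq_zero hψ _
    ((h.isTheta_pow_sInf ⟨j, hj⟩).mono nhdsWithin_le_nhds).2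

lemma sInf_eq_of_isTheta_comp (h : HasPS b ψ) (h' : HasPS b' ψ') {τ : ℝ → ℝ}
    (hτ : τ =Θ[𝓝[>] 0] id) (hτ0 : Tendsto τ (𝓝[>] 0) (𝓝[>] 0))
    (hψ' : ψ' =Θ[𝓝[>] 0] (ψ ∘ τ)) : sInf {j | b' j ≠ 0} = sInf {j | b j ≠ 0} := by
  have hτ0' : Tendsto τ (𝓝[>] 0) (𝓝 0) := hτ0.mono_right nhdsWithin_le_nhds
  by_cases hb : ∃ j, b j ≠ 0
  · have hψτ := h.isTheta_pow_sInf hb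
    exact h'.sInf_eq_of_isTheta <| hψ'.trans ((hψτ.comp_tendsto hτ0').trans (hτ.pow _))
  · push Not at hb
    have hψ'0 : ψ' =ᶠ[𝓝[>] 0] 0 := isBigO_zero_right_iff.1 <|
      hψ'.1.trans_eventuallyEq (hτ0'.eventually (h.eventually_eq_zero hb))
    simp [hb, h'.eq_zero_of_eventuallyEq_zero hψ'0]

lemma exists_abs_sub_le (h : HasPS b ψ) {M : ℕ} (hM : 0 < M) (hb : ∀ j < M, b j = 0) :
    ∃ ρ > 0, ∃ L ≥ 0, ∀ s t, 0 ≤ s → s ≤ t → t ≤ ρ → |ψ t - ψ s| ≤ L * (t ^ M - s ^ M) := by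
  obtain ⟨ρ, hρ, hsum, hrep⟩ := h.exists_summable
  set c : ℕ → ℝ := fun j => (∑' i, |b i| * ρ ^ i) / (ρ / 2) ^ M * (j * (1 / 2) ^ j)
  have hc : Summable c := by
    refine .mul_left _ ?_
    simpa using summable_pow_mul_geometric_of_norm_lt_one (R := ℝ) 1 (r := 1 / 2) (by norm_num)
  refine ⟨ρ / 2, half_pos hρ, ∑' j, c j, tsum_nonneg fun j => by positivity,
    fun s t hs hst ht => ?_⟩
  have hterm : ∀ j, ‖b j * (t ^ j - s ^ j)‖ ≤ c j * (t ^ M - s ^ M) := by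
    intro j
    rcases lt_or_ge j M with hj | hj
    · simp only [hb j hj, zero_mul, norm_zero]
      exact mul_nonneg (by positivity) (sub_nonneg.2 (by gcongr))
    · exact abs_mul_pow_sub_pow_le hρ hM hj (hsum.le_tsum j fun i _ => by positivity) hs hst ht
  have hdiff : HasSum (fun j => b j * (t ^ j - s ^ j)) (ψ t - ψ s) := by
    simpa only [mul_sub] using (hrep t (by rw [abs_of_nonneg (hs.trans hst)]; linarith)).sub
      (hrep s (by rw [abs_of_nonneg hs]; linarith))
  calc |ψ t - ψ s| = ‖∑' j, b j * (t ^ j - s ^ j)‖ := by rw [hdiff.tsum_eq, Real.norm_eq_abs]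
    _ ≤ ∑' j, c j * (t ^ M - s ^ M) := tsum_of_norm_bounded (hc.mul_right _).hasSum hterm
    _ = (∑' j, c j) * (t ^ M - s ^ M) := tsum_mul_right

lemma eventually_abs_sub_le (h : HasPS b ψ) {M : ℕ} (hM : 0 < M) (hb : ∀ j < M, b j = 0) :
    ∃ L ≥ 0, ∀ᶠ p : ℝ × ℝ in 𝓝[>] 0 ×ˢ 𝓝[>] 0, |ψ p.1 - ψ p.2| ≤ L * |p.1 ^ M - p.2 ^ M| := by
  obtain ⟨ρ, hρ, L, hL, hψ⟩ := h.exists_abs_sub_le hM hb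
  refine ⟨L, hL, ?_⟩
  filter_upwards [prod_mem_prod (Ioo_mem_nhdsGT hρ) (Ioo_mem_nhdsGT hρ)] with ⟨u, v⟩ ⟨hu, hv⟩
  dsimp only
  rcases le_total u v with huv | hvu
  · rw [abs_sub_comm (ψ u), abs_sub_comm (u ^ M),
      abs_of_nonneg (sub_nonneg.2 (pow_le_pow_left₀ hu.1.le huv M))]
    exact hψ u v hu.1.le huv hv.2.le
  · rw [abs_of_nonneg (sub_nonneg.2 (pow_le_pow_left₀ hv.1.le hvu M))]
    exact hψ v u hv.1.le hvu hu.2.le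

end HasPS

lemma HasDerivAt.isTheta_id {σ : ℝ → ℝ} {d : ℝ} (hσ : HasDerivAt σ d 0) (hσ0 : σ 0 = 0)
    (hd : d ≠ 0) : σ =Θ[𝓝 0] id := by
  have hk : Tendsto (fun x : ℝ => (x, (0 : ℝ))) (𝓝 0) (𝓝 0 ×ˢ pure 0) :=
    tendsto_id.prodMk tendsto_const_pure
  have h := ((hσ.hasDerivAtFilter le_rfl).isTheta_sub hd).comp_tendsto hk
  simp only [Function.comp_def, hσ0, sub_zero] at h
  exact h

lemma HasDerivAt.eventually_pos {σ : ℝ → ℝ} {d : ℝ} (hσ : HasDerivAt σ d 0) (hσ0 : σ 0 = 0)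
    (hd : 0 < d) : ∀ᶠ t in 𝓝[>] 0, 0 < σ t := by
  filter_upwards [hσ.tendsto_slope_zero_right.eventually (lt_mem_nhds hd), self_mem_nhdsWithin]
    with t ht ht0
  simp only [zero_add, hσ0, sub_zero, smul_eq_mul] at ht
  exact (pos_iff_pos_of_mul_pos ht).1 (inv_pos.2 ht0)

lemma exists_pow_reparam {σ : ℝ → ℝ} {d : ℝ} (hσ : HasDerivAt σ d 0) (hσ0 : σ 0 = 0)
    (hd : 0 < d) {k : ℕ} (hk : k ≠ 0) :
    ∃ τ : ℝ → ℝ, τ =Θ[𝓝[>] 0] id ∧ Tendsto τ (𝓝[>] 0) (𝓝[>] 0) ∧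
      ∀ᶠ s in 𝓝[>] 0, σ (s ^ k) = τ s ^ k := by
  set τ : ℝ → ℝ := fun s => σ (s ^ k) ^ (k⁻¹ : ℝ)
  have hτk : ∀ᶠ s in 𝓝[>] 0, 0 < τ s ∧ σ (s ^ k) = τ s ^ k := by
    filter_upwards [(tendsto_pow_nhdsGT_zero hk).eventually (hσ.eventually_pos hσ0 hd)] with s hs
    exact ⟨Real.rpow_pos_of_pos hs _, (Real.rpow_inv_natCast_pow hs.le hk).symm⟩
  have hτσ : (τ ^ k) =ᶠ[𝓝[>] 0] (σ ∘ fun s => s ^ k) := hτk.mono fun s hs => hs.2.symm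
  have hτkΘ : (τ ^ k) =Θ[𝓝[>] 0] (id ^ k) := hτσ.trans_isTheta <|
    (hσ.isTheta_id hσ0 hd.ne').comp_tendsto
      ((tendsto_pow_nhdsGT_zero hk).mono_right nhdsWithin_le_nhds)
  have hτ : τ =Θ[𝓝[>] 0] id := ⟨hτkΘ.1.of_pow hk, hτkΘ.2.of_pow hk⟩
  refine ⟨τ, hτ, tendsto_nhdsWithin_iff.2 ⟨?_, hτk.mono fun s hs => hs.1⟩,
    hτk.mono fun s hs => hs.2⟩
  exact hτ.1.trans_tendsto (tendsto_id.mono_left nhdsWithin_le_nhds)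

lemma exists_pow_reparam_inv {σ : ℝ → ℝ} {d : ℝ} (hσ : HasStrictDerivAt σ d 0)
    (hσ0 : σ 0 = 0) (hd : 0 < d) {k : ℕ} (hk : k ≠ 0) :
    ∃ ρ : ℝ → ℝ, Tendsto ρ (𝓝[>] 0) (𝓝[>] 0) ∧ ∀ᶠ u in 𝓝[>] 0, σ (ρ u ^ k) = u ^ k := by
  set g := hσ.localInverse σ d 0 hd.ne'
  have hg : HasStrictDerivAt g d⁻¹ 0 := by simpa [hσ0] using hσ.to_localInverse hd.ne'
  have hg0 : g 0 = 0 := by simpa [hσ0] using (hσ.eventually_left_inverse hd.ne').self_of_nhds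
  have hσg : ∀ᶠ v in 𝓝 0, σ (g v) = v := by simpa [hσ0] using hσ.eventually_right_inverse hd.ne'
  obtain ⟨ρ, -, hρ, hρk⟩ := exists_pow_reparam hg.hasDerivAt hg0 (inv_pos.2 hd) hk
  refine ⟨ρ, hρ, ?_⟩
  filter_upwards [hρk, (tendsto_pow_nhdsGT_zero hk).eventually (nhdsWithin_le_nhds hσg)]
    with u hu hσu
  rw [← hu, hσu]

lemma eventually_mk_eq_of_reparam {φ φ' σ : ℝ → ℝ} {Ψ : ℝ × ℝ → ℝ × ℝ} {m k M : ℕ}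
    (hkm : k * m = M) (heq : ∀ᶠ t in 𝓝[≥] 0, (φ' t, t ^ m) = Ψ (φ (σ t), σ t ^ m))
    {l : Filter ℝ} {p q : ℝ → ℝ} (hp : Tendsto (fun x => p x ^ k) l (𝓝[≥] 0))
    (hpq : ∀ᶠ x in l, σ (p x ^ k) = q x ^ k) :
    ∀ᶠ x in l, (φ' (p x ^ k), p x ^ M) = Ψ (φ (q x ^ k), q x ^ M) := by
  filter_upwards [hp.eventually heq, hpq] with x h h'
  rwa [← hkm, pow_mul, pow_mul, ← h']

lemma exists_graph_reparam {φ φ' σ : ℝ → ℝ} {Ψ : ℝ × ℝ → ℝ × ℝ} {m k M : ℕ}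
    (hσ : AnalyticAt ℝ σ 0) (hσ0 : σ 0 = 0) (hσd : 0 < deriv σ 0) (hk : k ≠ 0)
    (hkm : k * m = M) (heq : ∀ᶠ t in 𝓝[≥] 0, (φ' t, t ^ m) = Ψ (φ (σ t), σ t ^ m)) :
    ∃ τ ρ : ℝ → ℝ, τ =Θ[𝓝[>] 0] id ∧ Tendsto τ (𝓝[>] 0) (𝓝[>] 0) ∧
      Tendsto ρ (𝓝[>] 0) (𝓝[>] 0) ∧
      (∀ᶠ s in 𝓝[>] 0, (φ' (s ^ k), s ^ M) = Ψ (φ (τ s ^ k), τ s ^ M)) ∧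
      ∀ᶠ u in 𝓝[>] 0, (φ' (ρ u ^ k), ρ u ^ M) = Ψ (φ (u ^ k), u ^ M) := by
  have hpow : Tendsto (fun s : ℝ => s ^ k) (𝓝[>] 0) (𝓝[≥] 0) :=
    (tendsto_pow_nhdsGT_zero hk).mono_right (nhdsWithin_mono _ Set.Ioi_subset_Ici_self)
  obtain ⟨τ, hτ, hτ0, hτk⟩ := exists_pow_reparam hσ.hasStrictDerivAt.hasDerivAt hσ0 hσd hk
  obtain ⟨ρ, hρ0, hρk⟩ := exists_pow_reparam_inv hσ.hasStrictDerivAt hσ0 hσd hk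
  exact ⟨τ, ρ, hτ, hτ0, hρ0, eventually_mk_eq_of_reparam (p := id) hkm heq hpow hτk,
    eventually_mk_eq_of_reparam (q := id) hkm heq (hpow.comp hρ0) hρk⟩

lemma HasStrictFDerivAt.exists_antilipschitzWith {𝕜 E F : Type*} [NontriviallyNormedField 𝕜]
    [NormedAddCommGroup E] [NormedSpace 𝕜 E] [NormedAddCommGroup F] [NormedSpace 𝕜 F]
    {f : E → F} {f' : E ≃L[𝕜] F} {a : E} (hf : HasStrictFDerivAt f (f' : E →L[𝕜] F) a) :
    ∃ K, ∃ U ∈ 𝓝 a, AntilipschitzWith K (U.domRestrict f) := by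
  obtain ⟨U, hU, hfU⟩ := hf.approximates_deriv_on_nhds (c := ‖(f'.symm : F →L[𝕜] E)‖₊⁻¹ / 2)
    (f'.subsingleton_or_nnnorm_symm_pos.imp id fun h => by positivity)
  exact ⟨_, U, hU, hfU.antilipschitz (f'.subsingleton_or_nnnorm_symm_pos.imp id fun h =>
    NNReal.half_lt_self (inv_pos.2 h).ne')⟩

lemma norm_mk_sub_mk_same (x x' y : ℝ) : ‖((x, y) : ℝ × ℝ) - (x', y)‖ = |x - x'| := by
  simp [Prod.norm_def]

/-- If `(x₂, y₂)` and `(x₂', y₁)` lie on an `L`-Lipschitz graph `x = A(y)`, the horizontal distance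
from `(x₁, y₁)` to the graph is at most `1 + L` times its distance to `(x₂, y₂)`. -/
lemma abs_sub_le_mul_norm_sub {x₁ x₂ x₂' y₁ y₂ L : ℝ} (hL : 0 ≤ L)
    (h : |x₂ - x₂'| ≤ L * |y₂ - y₁|) :
    |x₁ - x₂'| ≤ (1 + L) * ‖((x₁, y₁) : ℝ × ℝ) - (x₂, y₂)‖ := by
  have hx : |x₁ - x₂| ≤ ‖((x₁, y₁) : ℝ × ℝ) - (x₂, y₂)‖ := by simp [Prod.norm_def]
  have hy : |y₂ - y₁| ≤ ‖((x₁, y₁) : ℝ × ℝ) - (x₂, y₂)‖ := by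
    simp [Prod.norm_def, abs_sub_comm y₂]
  calc |x₁ - x₂'| ≤ |x₁ - x₂| + |x₂ - x₂'| := abs_sub_le _ _ _
    _ ≤ ‖((x₁, y₁) : ℝ × ℝ) - (x₂, y₂)‖ + L * ‖((x₁, y₁) : ℝ × ℝ) - (x₂, y₂)‖ := by
      gcongr
      exact h.trans (by gcongr)
    _ = (1 + L) * ‖((x₁, y₁) : ℝ × ℝ) - (x₂, y₂)‖ := by ring

section Comparison

variable {Ψ : ℝ × ℝ → ℝ × ℝ} {U : Set (ℝ × ℝ)} {M : ℕ} {A₁ A₂ A₁' A₂' τ₁ : ℝ → ℝ}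

lemma isBigO_sub_of_antilipschitzWith {K : NNReal} (hΨ : AntilipschitzWith K (U.domRestrict Ψ))
    (hU : U ∈ 𝓝 0) (hA₁ : Tendsto (fun u => (A₁ u, u ^ M)) (𝓝[>] 0) (𝓝 0))
    (hA₂ : Tendsto (fun u => (A₂ u, u ^ M)) (𝓝[>] 0) (𝓝 0))
    (hL : ∃ L ≥ 0, ∀ᶠ p : ℝ × ℝ in 𝓝[>] 0 ×ˢ 𝓝[>] 0,
      |A₂ p.1 - A₂ p.2| ≤ L * |p.1 ^ M - p.2 ^ M|)
    {τ₂ : ℝ → ℝ} (hτ₁ : Tendsto τ₁ (𝓝[>] 0) (𝓝[>] 0)) (hτ₂ : Tendsto τ₂ (𝓝[>] 0) (𝓝[>] 0))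
    (h₁ : ∀ᶠ s in 𝓝[>] 0, (A₁' s, s ^ M) = Ψ (A₁ (τ₁ s), τ₁ s ^ M))
    (h₂ : ∀ᶠ s in 𝓝[>] 0, (A₂' s, s ^ M) = Ψ (A₂ (τ₂ s), τ₂ s ^ M)) :
    (fun s => A₁ (τ₁ s) - A₂ (τ₁ s)) =O[𝓝[>] 0] (fun s => A₁' s - A₂' s) := by
  obtain ⟨L, hL0, hL⟩ := hL
  refine .of_bound ((1 + L) * K) ?_
  filter_upwards [hτ₁.eventually (hA₁.eventually hU), hτ₂.eventually (hA₂.eventually hU),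
    (hτ₂.prodMk hτ₁).eventually hL, h₁, h₂] with s hp hq hLs e₁ e₂
  have hanti := hΨ.le_mul_dist ⟨_, hp⟩ ⟨_, hq⟩
  simp only [Subtype.dist_eq, Set.domRestrict_apply, dist_eq_norm] at hanti
  calc ‖A₁ (τ₁ s) - A₂ (τ₁ s)‖
      ≤ (1 + L) * ‖(A₁ (τ₁ s), τ₁ s ^ M) - (A₂ (τ₂ s), τ₂ s ^ M)‖ :=
        abs_sub_le_mul_norm_sub hL0 hLs
    _ ≤ (1 + L) * (K * ‖(A₁' s, s ^ M) - (A₂' s, s ^ M)‖) := by rw [e₁, e₂]; gcongr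
    _ = (1 + L) * K * ‖A₁' s - A₂' s‖ := by rw [norm_mk_sub_mk_same, mul_assoc]; rfl

lemma isBigO_sub_of_lipschitzOnWith {K : NNReal} (hΨ : LipschitzOnWith K Ψ U)
    (hU : U ∈ 𝓝 0) (hA₁ : Tendsto (fun u => (A₁ u, u ^ M)) (𝓝[>] 0) (𝓝 0))
    (hA₂ : Tendsto (fun u => (A₂ u, u ^ M)) (𝓝[>] 0) (𝓝 0))
    (hL : ∃ L ≥ 0, ∀ᶠ p : ℝ × ℝ in 𝓝[>] 0 ×ˢ 𝓝[>] 0,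
      |A₂' p.1 - A₂' p.2| ≤ L * |p.1 ^ M - p.2 ^ M|)
    {ρ₂ : ℝ → ℝ} (hτ₁ : Tendsto τ₁ (𝓝[>] 0) (𝓝[>] 0)) (hρ₂ : Tendsto ρ₂ (𝓝[>] 0) (𝓝[>] 0))
    (h₁ : ∀ᶠ s in 𝓝[>] 0, (A₁' s, s ^ M) = Ψ (A₁ (τ₁ s), τ₁ s ^ M))
    (h₂ : ∀ᶠ u in 𝓝[>] 0, (A₂' (ρ₂ u), ρ₂ u ^ M) = Ψ (A₂ u, u ^ M)) :
    (fun s => A₁' s - A₂' s) =O[𝓝[>] 0] (fun s => A₁ (τ₁ s) - A₂ (τ₁ s)) := by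
  obtain ⟨L, hL0, hL⟩ := hL
  refine .of_bound ((1 + L) * K) ?_
  filter_upwards [hτ₁.eventually (hA₁.eventually hU), hτ₁.eventually (hA₂.eventually hU),
    ((hρ₂.comp hτ₁).prodMk tendsto_id).eventually hL, h₁, hτ₁.eventually h₂]
    with s hp hq hLs e₁ e₂
  calc ‖A₁' s - A₂' s‖
      ≤ (1 + L) * ‖(A₁' s, s ^ M) - (A₂' (ρ₂ (τ₁ s)), ρ₂ (τ₁ s) ^ M)‖ :=
        abs_sub_le_mul_norm_sub hL0 hLs
    _ ≤ (1 + L) * (K * ‖(A₁ (τ₁ s), τ₁ s ^ M) - (A₂ (τ₁ s), τ₁ s ^ M)‖) := by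
        rw [e₁, e₂]; gcongr; exact hΨ.norm_sub_le hp hq
    _ = (1 + L) * K * ‖A₁ (τ₁ s) - A₂ (τ₁ s)‖ := by rw [norm_mk_sub_mk_same, mul_assoc]; rfl

lemma isTheta_sub_comp {Ψ' : (ℝ × ℝ) ≃L[ℝ] (ℝ × ℝ)}
    (hΨ : HasStrictFDerivAt Ψ (Ψ' : (ℝ × ℝ) →L[ℝ] (ℝ × ℝ)) 0) (hM : 0 < M) {b₁ b₂ b₂' : ℕ → ℝ}
    (hA₁ : HasPS b₁ A₁) (hb₁ : ∀ j < M, b₁ j = 0) (hA₂ : HasPS b₂ A₂) (hb₂ : ∀ j < M, b₂ j = 0)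
    (hA₂' : HasPS b₂' A₂') (hb₂' : ∀ j < M, b₂' j = 0) {τ₂ ρ₂ : ℝ → ℝ}
    (hτ₁ : Tendsto τ₁ (𝓝[>] 0) (𝓝[>] 0)) (hτ₂ : Tendsto τ₂ (𝓝[>] 0) (𝓝[>] 0))
    (hρ₂ : Tendsto ρ₂ (𝓝[>] 0) (𝓝[>] 0))
    (h₁ : ∀ᶠ s in 𝓝[>] 0, (A₁' s, s ^ M) = Ψ (A₁ (τ₁ s), τ₁ s ^ M))
    (h₂ : ∀ᶠ s in 𝓝[>] 0, (A₂' s, s ^ M) = Ψ (A₂ (τ₂ s), τ₂ s ^ M))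
    (h₂' : ∀ᶠ u in 𝓝[>] 0, (A₂' (ρ₂ u), ρ₂ u ^ M) = Ψ (A₂ u, u ^ M)) :
    (fun s => A₁' s - A₂' s) =Θ[𝓝[>] 0] (fun s => A₁ (τ₁ s) - A₂ (τ₁ s)) := by
  obtain ⟨K₁, U₁, hU₁, hanti⟩ := hΨ.exists_antilipschitzWith
  obtain ⟨K₂, U₂, hU₂, hlip⟩ := hΨ.exists_lipschitzOnWith
  have hA₁0 := hA₁.tendsto_mk_pow (hb₁ 0 hM) hM.ne'
  have hA₂0 := hA₂.tendsto_mk_pow (hb₂ 0 hM) hM.ne'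
  exact ⟨isBigO_sub_of_lipschitzOnWith hlip hU₂ hA₁0 hA₂0 (hA₂'.eventually_abs_sub_le hM hb₂')
      hτ₁ hρ₂ h₁ h₂',
    isBigO_sub_of_antilipschitzWith hanti hU₁ hA₁0 hA₂0 (hA₂.eventually_abs_sub_le hM hb₂)
      hτ₁ hτ₂ h₁ h₂⟩

end Comparison

theorem contact_order_well_defined_general
    (m₁ m₂ : ℕ) (a₁ a₂ a₁' a₂' : ℕ → ℝ) (φ₁ φ₂ φ₁' φ₂' : ℝ → ℝ)
    (ha₁ : IsPres m₁ a₁) (ha₂ : IsPres m₂ a₂)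
    (ha₂' : IsPres m₂ a₂')
    (hφ₁ : HasPS a₁ φ₁) (hφ₂ : HasPS a₂ φ₂)
    (hφ₁' : HasPS a₁' φ₁') (hφ₂' : HasPS a₂' φ₂')
    (Ψ : ℝ × ℝ → ℝ × ℝ) (σ₁ σ₂ : ℝ → ℝ)
    (hΨa : AnalyticAt ℝ Ψ 0)
    (hΨdet : (fderiv ℝ Ψ 0).det ≠ 0)
    (hσ₁a : AnalyticAt ℝ σ₁ 0) (hσ₁0 : σ₁ 0 = 0) (hσ₁d : 0 < deriv σ₁ 0)
    (hσ₂a : AnalyticAt ℝ σ₂ 0) (hσ₂0 : σ₂ 0 = 0) (hσ₂d : 0 < deriv σ₂ 0)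
    (heq₁ : ∀ᶠ t in 𝓝[≥] (0 : ℝ), (φ₁' t, t ^ m₁) = Ψ (φ₁ (σ₁ t), (σ₁ t) ^ m₁))
    (heq₂ : ∀ᶠ t in 𝓝[≥] (0 : ℝ), (φ₂' t, t ^ m₂) = Ψ (φ₂ (σ₂ t), (σ₂ t) ^ m₂)) :
    contactOrd m₁ m₂ a₁' a₂' = contactOrd m₁ m₂ a₁ a₂ := by
  obtain ⟨hm₁, hv₁, -⟩ := ha₁
  obtain ⟨hm₂, hv₂, -⟩ := ha₂
  set M := Nat.lcm m₁ m₂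
  have hM : 0 < M := Nat.lcm_pos hm₁ hm₂
  have hk₁ : M / m₁ * m₁ = M := Nat.div_mul_cancel (Nat.dvd_lcm_left m₁ m₂)
  have hk₂ : M / m₂ * m₂ = M := Nat.div_mul_cancel (Nat.dvd_lcm_right m₁ m₂)
  have hk₁0 : 0 < M / m₁ := Nat.div_pos (Nat.le_of_dvd hM (Nat.dvd_lcm_left m₁ m₂)) hm₁
  have hk₂0 : 0 < M / m₂ := Nat.div_pos (Nat.le_of_dvd hM (Nat.dvd_lcm_right m₁ m₂)) hm₂
  obtain ⟨τ₁, -, hτ₁, hτ₁0, -, h₁, -⟩ := exists_graph_reparam hσ₁a hσ₁0 hσ₁d hk₁0.ne' hk₁ heq₁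
  obtain ⟨τ₂, ρ₂, -, hτ₂0, hρ₂0, h₂, h₂'⟩ :=
    exists_graph_reparam hσ₂a hσ₂0 hσ₂d hk₂0.ne' hk₂ heq₂
  have hΨ := hΨa.hasStrictFDerivAt
  rw [← ContinuousLinearMap.coe_toContinuousLinearEquivOfDetNeZero _ hΨdet] at hΨ
  have hset : ∀ b₁ b₂ : ℕ → ℝ, {j | b₁ j ≠ b₂ j} = {j | b₁ j - b₂ j ≠ 0} := by
    simp [sub_ne_zero]
  rw [contactOrd, contactOrd, hset (stretch _ a₁'), hset (stretch _ a₁)]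
  congr 2
  refine ((hφ₁.comp_pow hk₁0).sub (hφ₂.comp_pow hk₂0)).sInf_eq_of_isTheta_comp
    ((hφ₁'.comp_pow hk₁0).sub (hφ₂'.comp_pow hk₂0)) hτ₁ hτ₁0 ?_
  exact isTheta_sub_comp hΨ hM (hφ₁.comp_pow hk₁0) (stretch_eq_zero_of_lt hv₁ hk₁)
    (hφ₂.comp_pow hk₂0) (stretch_eq_zero_of_lt hv₂ hk₂) (hφ₂'.comp_pow hk₂0)
    (stretch_eq_zero_of_lt ha₂'.2.1 hk₂) hτ₁0 hτ₂0 hρ₂0 h₁ h₂ h₂'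

/-- **Well-definedness of the contact order.**  Let `γ₁, γ₂` be tangent reduced real analytic
demi-branches at `0 ∈ ℝ²` presented in common coordinates as `γᵢ(t) = (φᵢ(t), t^{mᵢ})`, and let
`γ'ᵢ(t) = (φ'ᵢ(t), t^{mᵢ})` be presentations of the same demi-branches in another analytic
coordinate system, i.e. `γ'ᵢ = Ψ ∘ γᵢ ∘ σᵢ` with `Ψ` an analytic diffeomorphism germ of
`(ℝ²,0)` and `σᵢ` orientation-preserving analytic diffeomorphism germs of `(ℝ,0)`.
Then `O(γ'₁, γ'₂) = O(γ₁, γ₂)`. -/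
theorem contact_order_well_defined
    (m₁ m₂ : ℕ) (a₁ a₂ a₁' a₂' : ℕ → ℝ) (φ₁ φ₂ φ₁' φ₂' : ℝ → ℝ)
    (ha₁ : IsPres m₁ a₁) (ha₂ : IsPres m₂ a₂)
    (ha₁' : IsPres m₁ a₁') (ha₂' : IsPres m₂ a₂')
    (hφ₁ : HasPS a₁ φ₁) (hφ₂ : HasPS a₂ φ₂)
    (hφ₁' : HasPS a₁' φ₁') (hφ₂' : HasPS a₂' φ₂')
    (htan : Tangent (fun t => (φ₁ t, t ^ m₁)) (fun t => (φ₂ t, t ^ m₂)))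
    (Ψ : ℝ × ℝ → ℝ × ℝ) (σ₁ σ₂ : ℝ → ℝ)
    (hΨa : AnalyticAt ℝ Ψ 0) (hΨ0 : Ψ 0 = 0)
    (hΨdet : (fderiv ℝ Ψ 0).det ≠ 0)
    (hσ₁a : AnalyticAt ℝ σ₁ 0) (hσ₁0 : σ₁ 0 = 0) (hσ₁d : 0 < deriv σ₁ 0)
    (hσ₂a : AnalyticAt ℝ σ₂ 0) (hσ₂0 : σ₂ 0 = 0) (hσ₂d : 0 < deriv σ₂ 0)
    (heq₁ : ∀ᶠ t in 𝓝[≥] (0 : ℝ), (φ₁' t, t ^ m₁) = Ψ (φ₁ (σ₁ t), (σ₁ t) ^ m₁))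
    (heq₂ : ∀ᶠ t in 𝓝[≥] (0 : ℝ), (φ₂' t, t ^ m₂) = Ψ (φ₂ (σ₂ t), (σ₂ t) ^ m₂)) :
    contactOrd m₁ m₂ a₁' a₂' = contactOrd m₁ m₂ a₁ a₂ :=
  contact_order_well_defined_general m₁ m₂ a₁ a₂ a₁' a₂' φ₁ φ₂ φ₁' φ₂' ha₁ ha₂ ha₂' hφ₁ hφ₂ hφ₁'
    hφ₂' Ψ σ₁ σ₂ hΨa hΨdet hσ₁a hσ₁0 hσ₁d hσ₂a hσ₂0 hσ₂d heq₁ heq₂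
end

section
/- With the notation of the Newton–Puiseux factorization setup, set A = { i : ord_t(φ_i − φ_γ) ≥ Mξ } and, for i ∈ A, let c_i ∈ ℂ be the coefficient of t^{Mξ} in φ_i − φ_γ; for i ∉ A let b_i ∈ ℂ be the leading coefficient of φ_γ − φ_i (the coefficient of t^{ord_t(φ_γ − φ_i)}). Then N = |A|·Mξ + Σ_{i∉A} ord_t(φ_i − φ_γ) and P_{f,γ,ξ}(z) = c·∏_{i∈A} (z − c_i), where c = U(0,0)·∏_{i∉A} b_i ≠ 0. In particular deg P_{f,γ,ξ} = |A| and the complex roots of P_{f,γ,ξ} are exactly the numbers c_i, i ∈ A. (The computation in the proof of Proposition 7.1 of the paper.) -/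
/-!  Setup (Proposition 7.1 of the paper).  `f : (ℝ²,0) → (ℝ,0)` is mini-regular in `x` of
order `m`, and `f(x, t^M) = U(x,t)·∏ᵢ (x − φᵢ(t))` is a Newton–Puiseux factorization, with
`U(x,t) = Σₙ Uₙ(t) xⁿ` analytic, `U(0,0) ≠ 0`, and `φ₁, …, φ_m` complex power series vanishing
at `0`.  Here the factorized data `U, φ` is taken as the primitive datum.  For a real demi-branch
`x = λ(y)` with `φγ(t) = λ(t^M)` and a rational `ξ > 1` with `e = Mξ ∈ ℕ`, the expansion
`f(φγ(t) + z·t^e, t^M) = Σ_k F_k(z) t^k` is the power series `Gser` below, with coefficients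
`F_k ∈ ℂ[z]`; `N = min{k : F_k ≠ 0}` and `P_{f,γ,ξ} = F_N`. -/

/-- Substitution of a power series `q` with vanishing constant term for `x` in
`U(x,t) = Σₙ Uₙ(t) xⁿ` (the truncated sum is the full one since `ord qⁿ ≥ n`). -/
noncomputable def substX (U : ℕ → PowerSeries ℂ) (q : PowerSeries (Polynomial ℂ)) :
    PowerSeries (Polynomial ℂ) :=
  PowerSeries.mk fun k => ∑ n ∈ Finset.range (k + 1),
    PowerSeries.coeff (R := Polynomial ℂ) k
      (PowerSeries.map (Polynomial.C : ℂ →+* Polynomial ℂ) (U n) * q ^ n)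

/-- The complexification of the real power series `φγ`. -/
noncomputable def cxify (φγ : PowerSeries ℝ) : PowerSeries ℂ :=
  PowerSeries.map (algebraMap ℝ ℂ) φγ

/-- `xsub = φγ(t) + z·t^e`, as a power series in `t` with coefficients in `ℂ[z]`. -/
noncomputable def xsub (φγ : PowerSeries ℝ) (e : ℕ) : PowerSeries (Polynomial ℂ) :=
  PowerSeries.map (Polynomial.C : ℂ →+* Polynomial ℂ) (cxify φγ)
    + PowerSeries.monomial (R := Polynomial ℂ) e Polynomial.X

/-- `Gser = U(xsub, t) · ∏ᵢ (xsub − φᵢ(t)) = f(φγ(t) + z t^e, t^M) = Σ_k F_k(z) t^k`. -/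
noncomputable def Gser (m : ℕ) (U : ℕ → PowerSeries ℂ) (φ : Fin m → PowerSeries ℂ)
    (φγ : PowerSeries ℝ) (e : ℕ) : PowerSeries (Polynomial ℂ) :=
  substX U (xsub φγ e) *
    ∏ i : Fin m, (xsub φγ e - PowerSeries.map (Polynomial.C : ℂ →+* Polynomial ℂ) (φ i))

open scoped Classical in
/-- `A = {i : ord (φᵢ − φγ) ≥ e}`. -/
noncomputable def Aset (m e : ℕ) (φ : Fin m → PowerSeries ℂ) (φγ : PowerSeries ℝ) :
    Finset (Fin m) :=
  Finset.univ.filter fun i =>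
    ∀ n < e, PowerSeries.coeff (R := ℂ) n (φ i) = PowerSeries.coeff (R := ℂ) n (cxify φγ)

/-- For `i ∈ A`, the coefficient `cᵢ` of `t^e` in `φᵢ − φγ`. -/
noncomputable def cCoeff (e : ℕ) {m : ℕ} (φ : Fin m → PowerSeries ℂ) (φγ : PowerSeries ℝ)
    (i : Fin m) : ℂ :=
  PowerSeries.coeff (R := ℂ) e (φ i) - PowerSeries.coeff (R := ℂ) e (cxify φγ)

/-- For `i ∉ A`, the order `ord (φᵢ − φγ)`. -/
noncomputable def dOrd {m : ℕ} (φ : Fin m → PowerSeries ℂ) (φγ : PowerSeries ℝ)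
    (i : Fin m) : ℕ :=
  sInf {n : ℕ | PowerSeries.coeff (R := ℂ) n (φ i) ≠ PowerSeries.coeff (R := ℂ) n (cxify φγ)}

/-- For `i ∉ A`, the leading coefficient `bᵢ` of `φγ − φᵢ`. -/
noncomputable def bCoeff {m : ℕ} (φ : Fin m → PowerSeries ℂ) (φγ : PowerSeries ℝ)
    (i : Fin m) : ℂ :=
  PowerSeries.coeff (R := ℂ) (dOrd φ φγ i) (cxify φγ) - PowerSeries.coeff (R := ℂ) (dOrd φ φγ i) (φ i)

/-- `N = min{k : F_k ≠ 0}`. -/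
noncomputable def Nord (m : ℕ) (U : ℕ → PowerSeries ℂ) (φ : Fin m → PowerSeries ℂ)
    (φγ : PowerSeries ℝ) (e : ℕ) : ℕ :=
  sInf {k : ℕ | PowerSeries.coeff (R := Polynomial ℂ) k (Gser m U φ φγ e) ≠ 0}

/-- `P_{f,γ,ξ} = F_N`. -/
noncomputable def Ppoly (m : ℕ) (U : ℕ → PowerSeries ℂ) (φ : Fin m → PowerSeries ℂ)
    (φγ : PowerSeries ℝ) (e : ℕ) : Polynomial ℂ :=
  PowerSeries.coeff (R := Polynomial ℂ) (Nord m U φ φγ e) (Gser m U φ φγ e)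

/-! In `ℂ[z]⟦t⟧` the order is additive and the leading coefficient multiplicative, since
`ℂ[z]` is a domain.  The unit `U(xsub, t)` has order `0` and leading coefficient `U(0,0)`; the
factor `xsub - φᵢ = (φγ - φᵢ) + z t^e` has leading term `(z - cᵢ) t^e` when `i ∈ A` and
`bᵢ t^{ord (φᵢ - φγ)}` otherwise.  Multiplying gives `N` and `P_{f,γ,ξ}` at once. -/

namespace PowerSeries

variable {R : Type*}

theorem sInf_coeff_ne_zero_eq_order_toNat [Semiring R] (f : R⟦X⟧) :
    sInf {k | coeff k f ≠ 0} = f.order.toNat := by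
  rcases eq_or_ne f 0 with rfl | hf
  · simp
  have hmem : f.order.toNat ∈ {k | coeff k f ≠ 0} := coeff_order hf
  refine le_antisymm (Nat.sInf_le hmem) (le_csInf ⟨_, hmem⟩ fun k hk => ?_)
  by_contra! hlt
  exact hk (coeff_of_lt_order_toNat k hlt)

/-- `divXPowOrder` is multiplicative and its constant coefficient is the leading coefficient. -/
theorem coeff_add_mul_of_order_eq [Semiring R] [NoZeroDivisors R] {f g : R⟦X⟧} {a b : ℕ} (hf : f.order = a) (hg : g.order = b) :
    coeff (a + b) (f * g) = coeff a f * coeff b g := by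
  have := congrArg constantCoeff (divXPowOrder_mul (f := f) (g := g))
  simpa [constantCoeff_divXPowOrder, order_mul, hf, hg, ← Nat.cast_add] using this

section Prod

variable [CommSemiring R] [NoZeroDivisors R] [Nontrivial R]

theorem order_prod_of_order_eq {ι : Type*} {s : Finset ι} {f : ι → R⟦X⟧} {n : ι → ℕ}
    (h : ∀ i ∈ s, (f i).order = n i) : (∏ i ∈ s, f i).order = ↑(∑ i ∈ s, n i) := by
  rw [order_prod, Nat.cast_sum]
  exact Finset.sum_congr rfl h

theorem coeff_sum_prod_of_order_eq {ι : Type*} {s : Finset ι} {f : ι → R⟦X⟧} {n : ι → ℕ}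
    (h : ∀ i ∈ s, (f i).order = n i) :
    coeff (∑ i ∈ s, n i) (∏ i ∈ s, f i) = ∏ i ∈ s, coeff (n i) (f i) := by
  have := congrArg constantCoeff (divXPowOrder_prod f s)
  rw [map_prod, constantCoeff_divXPowOrder, order_prod_of_order_eq h, ENat.toNat_natCast] at this
  rw [this]
  exact Finset.prod_congr rfl fun i hi => by
    rw [constantCoeff_divXPowOrder, h i hi, ENat.toNat_natCast]

end Prod

end PowerSeries

namespace Polynomial

variable {R : Type*} [CommRing R] [IsDomain R] {ι : Type*}

theorem natDegree_C_mul_prod_X_sub_C {c : R} (hc : c ≠ 0) (s : Finset ι) (a : ι → R) :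
    (C c * ∏ i ∈ s, (X - C (a i))).natDegree = s.card := by
  rw [natDegree_C_mul hc, natDegree_prod _ _ fun i _ => X_sub_C_ne_zero (a i)]
  simp

theorem isRoot_C_mul_prod_X_sub_C_iff {c : R} (hc : c ≠ 0) (s : Finset ι) (a : ι → R) (z : R) :
    (C c * ∏ i ∈ s, (X - C (a i))).IsRoot z ↔ ∃ i ∈ s, a i = z := by
  simp only [IsRoot.def, eval_mul, eval_C, eval_prod, eval_sub, eval_X, mul_eq_zero, hc, false_or,
    Finset.prod_eq_zero_iff, sub_eq_zero]
  exact exists_congr fun i => and_congr_right fun _ => eq_comm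

end Polynomial

section PuiseuxComputation

open Polynomial

variable {m e : ℕ} {φ : Fin m → PowerSeries ℂ} {φγ : PowerSeries ℝ} {i : Fin m}

theorem coeff_zero_substX (U : ℕ → PowerSeries ℂ) (q : PowerSeries ℂ[X]) :
    PowerSeries.coeff 0 (substX U q) = C (PowerSeries.constantCoeff (U 0)) := by
  rw [substX, PowerSeries.coeff_mk, Finset.sum_range_one, pow_zero, mul_one,
    PowerSeries.coeff_map, PowerSeries.coeff_zero_eq_constantCoeff_apply]

theorem order_substX {U : ℕ → PowerSeries ℂ} (hU : PowerSeries.constantCoeff (U 0) ≠ 0)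
    (q : PowerSeries ℂ[X]) : (substX U q).order = 0 := by
  rw [← Nat.cast_zero, PowerSeries.order_eq_nat, coeff_zero_substX]
  exact ⟨C_ne_zero.mpr hU, fun _ h => absurd h (Nat.not_lt_zero _)⟩

theorem coeff_xsub_sub_map (n : ℕ) :
    PowerSeries.coeff n (xsub φγ e - PowerSeries.map C (φ i)) =
      C (PowerSeries.coeff n (cxify φγ) - PowerSeries.coeff n (φ i)) + if n = e then X else 0 := by
  simp [xsub, PowerSeries.coeff_monomial, sub_add_eq_add_sub]

theorem mem_Aset_iff :
    i ∈ Aset m e φ φγ ↔ ∀ n < e, PowerSeries.coeff n (φ i) = PowerSeries.coeff n (cxify φγ) := by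
  classical
  simp [Aset]

theorem dOrd_spec (hi : i ∉ Aset m e φ φγ) :
    dOrd φ φγ i < e ∧
      (∀ n < dOrd φ φγ i, PowerSeries.coeff n (φ i) = PowerSeries.coeff n (cxify φγ)) ∧
      PowerSeries.coeff (dOrd φ φγ i) (φ i) ≠ PowerSeries.coeff (dOrd φ φγ i) (cxify φγ) := by
  obtain ⟨n, hn, hne⟩ : ∃ n < e, PowerSeries.coeff n (φ i) ≠ PowerSeries.coeff n (cxify φγ) := by
    simpa [mem_Aset_iff] using hi
  have hS : {k | PowerSeries.coeff k (φ i) ≠ PowerSeries.coeff k (cxify φγ)}.Nonempty := ⟨n, hne⟩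
  exact ⟨(Nat.sInf_le hne).trans_lt hn, fun k hk => not_not.mp (Nat.notMem_of_lt_sInf hk),
    Nat.sInf_mem hS⟩

theorem order_xsub_sub_map_of_mem (hi : i ∈ Aset m e φ φγ) :
    (xsub φγ e - PowerSeries.map C (φ i)).order = e ∧
      PowerSeries.coeff e (xsub φγ e - PowerSeries.map C (φ i)) = X - C (cCoeff e φ φγ i) := by
  have hlead : PowerSeries.coeff e (xsub φγ e - PowerSeries.map C (φ i)) =
      X - C (cCoeff e φ φγ i) := by
    rw [coeff_xsub_sub_map, if_pos rfl, cCoeff, ← neg_sub, map_neg]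
    ring
  refine ⟨PowerSeries.order_eq_nat.mpr ⟨hlead ▸ X_sub_C_ne_zero _, fun n hn => ?_⟩, hlead⟩
  rw [coeff_xsub_sub_map, mem_Aset_iff.mp hi n hn, sub_self, map_zero, if_neg hn.ne, add_zero]

theorem order_xsub_sub_map_of_notMem (hi : i ∉ Aset m e φ φγ) :
    (xsub φγ e - PowerSeries.map C (φ i)).order = dOrd φ φγ i ∧
      PowerSeries.coeff (dOrd φ φγ i) (xsub φγ e - PowerSeries.map C (φ i)) =
        C (bCoeff φ φγ i) := by
  obtain ⟨hlt, hbelow, hne⟩ := dOrd_spec hi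
  have hlead : PowerSeries.coeff (dOrd φ φγ i) (xsub φγ e - PowerSeries.map C (φ i)) =
      C (bCoeff φ φγ i) := by
    rw [coeff_xsub_sub_map, if_neg hlt.ne, add_zero, bCoeff]
  refine ⟨PowerSeries.order_eq_nat.mpr ⟨?_, fun n hn => ?_⟩, hlead⟩
  · rw [hlead, C_ne_zero, bCoeff]
    exact sub_ne_zero.mpr hne.symm
  · rw [coeff_xsub_sub_map, hbelow n hn, sub_self, map_zero, if_neg (hn.trans hlt).ne, add_zero]

theorem bCoeff_ne_zero (hi : i ∉ Aset m e φ φγ) : bCoeff φ φγ i ≠ 0 :=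
  sub_ne_zero.mpr (dOrd_spec hi).2.2.symm

theorem order_Gser_and_coeff_order {U : ℕ → PowerSeries ℂ}
    (hU : PowerSeries.constantCoeff (U 0) ≠ 0) :
    (Gser m U φ φγ e).order =
        ↑((Aset m e φ φγ).card * e + ∑ i ∈ (Aset m e φ φγ)ᶜ, dOrd φ φγ i) ∧
      PowerSeries.coeff ((Aset m e φ φγ).card * e + ∑ i ∈ (Aset m e φ φγ)ᶜ, dOrd φ φγ i)
          (Gser m U φ φγ e) =
        C (PowerSeries.constantCoeff (U 0) * ∏ i ∈ (Aset m e φ φγ)ᶜ, bCoeff φ φγ i) *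
          ∏ i ∈ Aset m e φ φγ, (X - C (cCoeff e φ φγ i)) := by
  set A := Aset m e φ φγ
  set F : Fin m → PowerSeries ℂ[X] := fun i => xsub φγ e - PowerSeries.map C (φ i)
  have hFA : ∀ i ∈ A, (F i).order = e := fun i hi => (order_xsub_sub_map_of_mem hi).1
  have hFB : ∀ i ∈ Aᶜ, (F i).order = dOrd φ φγ i := fun i hi =>
    (order_xsub_sub_map_of_notMem (Finset.mem_compl.mp hi)).1
  have hcardA : ∑ _i ∈ A, e = A.card * e := by rw [Finset.sum_const, smul_eq_mul]
  have hPA : (∏ i ∈ A, F i).order = ↑(A.card * e) :=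
    hcardA ▸ PowerSeries.order_prod_of_order_eq hFA
  have hPB := PowerSeries.order_prod_of_order_eq hFB
  have hPAB : ((∏ i ∈ A, F i) * ∏ i ∈ Aᶜ, F i).order =
      ↑(A.card * e + ∑ i ∈ Aᶜ, dOrd φ φγ i) := by
    rw [PowerSeries.order_mul, hPA, hPB, Nat.cast_add]
  have hG : Gser m U φ φγ e = substX U (xsub φγ e) * ((∏ i ∈ A, F i) * ∏ i ∈ Aᶜ, F i) := by
    rw [Finset.prod_mul_prod_compl]; rfl
  refine ⟨?_, ?_⟩
  · rw [hG, PowerSeries.order_mul, order_substX hU, hPAB, zero_add]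
  · rw [hG, ← zero_add (_ + _), PowerSeries.coeff_add_mul_of_order_eq (order_substX hU _) hPAB,
      PowerSeries.coeff_add_mul_of_order_eq hPA hPB, coeff_zero_substX, ← hcardA,
      PowerSeries.coeff_sum_prod_of_order_eq hFA, PowerSeries.coeff_sum_prod_of_order_eq hFB,
      Finset.prod_congr rfl fun i hi => (order_xsub_sub_map_of_mem hi).2,
      Finset.prod_congr rfl fun i hi =>
        (order_xsub_sub_map_of_notMem (Finset.mem_compl.mp hi)).2, ← map_prod, map_mul]
    ring

end PuiseuxComputation

theorem prop71_computation_general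
    (m e : ℕ)
    (U : ℕ → PowerSeries ℂ) (hU : PowerSeries.constantCoeff (R := ℂ) (U 0) ≠ 0)
    (φ : Fin m → PowerSeries ℂ)
    (φγ : PowerSeries ℝ) :
    Nord m U φ φγ e = (Aset m e φ φγ).card * e + ∑ i ∈ (Aset m e φ φγ)ᶜ, dOrd φ φγ i ∧
    PowerSeries.constantCoeff (R := ℂ) (U 0) * ∏ i ∈ (Aset m e φ φγ)ᶜ, bCoeff φ φγ i ≠ 0 ∧
    Ppoly m U φ φγ e =
      Polynomial.C (PowerSeries.constantCoeff (R := ℂ) (U 0) * ∏ i ∈ (Aset m e φ φγ)ᶜ, bCoeff φ φγ i) *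
        ∏ i ∈ Aset m e φ φγ, (Polynomial.X - Polynomial.C (cCoeff e φ φγ i)) ∧
    (Ppoly m U φ φγ e).natDegree = (Aset m e φ φγ).card ∧
    ∀ z : ℂ, (Ppoly m U φ φγ e).IsRoot z ↔ ∃ i ∈ Aset m e φ φγ, cCoeff e φ φγ i = z := by
  obtain ⟨hord, hlead⟩ := order_Gser_and_coeff_order (φ := φ) (φγ := φγ) (e := e) hU
  have hc : PowerSeries.constantCoeff (U 0) * ∏ i ∈ (Aset m e φ φγ)ᶜ, bCoeff φ φγ i ≠ 0 :=
    mul_ne_zero hU <| Finset.prod_ne_zero_iff.mpr fun i hi =>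
      bCoeff_ne_zero (Finset.mem_compl.mp hi)
  have hN : Nord m U φ φγ e = (Aset m e φ φγ).card * e + ∑ i ∈ (Aset m e φ φγ)ᶜ, dOrd φ φγ i := by
    rw [Nord, PowerSeries.sInf_coeff_ne_zero_eq_order_toNat, hord, ENat.toNat_natCast]
  refine ⟨hN, hc, ?_⟩
  rw [Ppoly, hN, hlead]
  exact ⟨rfl, Polynomial.natDegree_C_mul_prod_X_sub_C hc _ _,
    Polynomial.isRoot_C_mul_prod_X_sub_C_iff hc _ _⟩

/-- **The computation in the proof of Proposition 7.1.**  With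
`A = {i : ord(φᵢ − φγ) ≥ Mξ}`, `cᵢ = coeff_{Mξ}(φᵢ − φγ)` for `i ∈ A`, and `bᵢ` the leading
coefficient of `φγ − φᵢ` for `i ∉ A`, one has `N = |A|·Mξ + Σ_{i∉A} ord(φᵢ − φγ)` and
`P_{f,γ,ξ}(z) = c·∏_{i∈A}(z − cᵢ)` with `c = U(0,0)·∏_{i∉A} bᵢ ≠ 0`.  In particular
`deg P_{f,γ,ξ} = |A|` and the complex roots of `P_{f,γ,ξ}` are exactly the `cᵢ`, `i ∈ A`. -/
theorem prop71_computation
    (m M e : ℕ) (hm : 0 < m) (hM : 0 < M) (he : M < e)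
    (U : ℕ → PowerSeries ℂ) (hU : PowerSeries.constantCoeff (R := ℂ) (U 0) ≠ 0)
    (φ : Fin m → PowerSeries ℂ) (hφ0 : ∀ i, PowerSeries.constantCoeff (R := ℂ) (φ i) = 0)
    (φγ : PowerSeries ℝ) (hφγ0 : PowerSeries.constantCoeff (R := ℝ) φγ = 0) :
    Nord m U φ φγ e = (Aset m e φ φγ).card * e + ∑ i ∈ (Aset m e φ φγ)ᶜ, dOrd φ φγ i ∧
    PowerSeries.constantCoeff (R := ℂ) (U 0) * ∏ i ∈ (Aset m e φ φγ)ᶜ, bCoeff φ φγ i ≠ 0 ∧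
    Ppoly m U φ φγ e =
      Polynomial.C (PowerSeries.constantCoeff (R := ℂ) (U 0) * ∏ i ∈ (Aset m e φ φγ)ᶜ, bCoeff φ φγ i) *
        ∏ i ∈ Aset m e φ φγ, (Polynomial.X - Polynomial.C (cCoeff e φ φγ i)) ∧
    (Ppoly m U φ φγ e).natDegree = (Aset m e φ φγ).card ∧
    ∀ z : ℂ, (Ppoly m U φ φγ e).IsRoot z ↔ ∃ i ∈ Aset m e φ φγ, cCoeff e φ φγ i = z :=
  prop71_computation_general m e U hU φ φγ
end

section
/- Consider finite simple graphs G with vertex set V, a multiplicity function μ : V → ℕ_{>0}, a parity function p : V → {0,1}, and a marked vertex v_0, generated from the initial datum (V = {v_0}, no edges, μ(v_0) an arbitrary positive integer, p(v_0) = 1) by finitely many applications of the two moves A and B. Then for every such admissible graph and every vertex v, the rational number ε(v) = p(v) + Σ_{v' adjacent to v} μ(v')/μ(v) is an integer; moreover ε(v_0) is odd, and ε(v) is even for every vertex v ≠ v_0. (This is the combinatorial content of the lemma in Section 3 of the paper used to recognize the first exceptional divisor E_1 on the weighted dual resolution graph when the leading form of f vanishes only at the origin.) -/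
/-- A weighted graph with parities, modelling the dual resolution graph: vertices are
`0, …, n−1` (vertex `0` is the marked vertex `v₀`, corresponding to the first exceptional
divisor `E₁`), `adj` is the (symmetric, irreflexive) adjacency, `mu v` is the multiplicity of
the divisor corresponding to `v` and `par v ∈ {0,1}` its parity (`0` if the divisor has an
orientable neighbourhood, `1` if its tubular neighbourhood is a Möbius band). -/
structure ResGraph where
  n : ℕ
  adj : ℕ → ℕ → Bool
  mu : ℕ → ℕ
  par : ℕ → ℕ

namespace ResGraph

/-- Move A: blow up a simple point of the divisor corresponding to `v`.  A new vertex
`w = G.n` is added with `μ(w) = μ(v)`, `p(w) = 1`, joined to `v` by an edge, and the parity of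
`v` is reversed. -/
def applyA (G : ResGraph) (v : ℕ) : ResGraph where
  n := G.n + 1
  adj := fun i j =>
    if (i = v ∧ j = G.n) ∨ (i = G.n ∧ j = v) then true else G.adj i j
  mu := fun k => if k = G.n then G.mu v else G.mu k
  par := fun k => if k = G.n then 1 else if k = v then 1 - G.par k else G.par k

/-- Move B: blow up the intersection point of the divisors corresponding to `v` and `v'`.
The edge `{v,v'}` is deleted, a new vertex `w = G.n` with `μ(w) = μ(v) + μ(v')`, `p(w) = 1` is
added and joined to both `v` and `v'`, and the parities of `v` and `v'` are reversed. -/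
def applyB (G : ResGraph) (v v' : ℕ) : ResGraph where
  n := G.n + 1
  adj := fun i j =>
    if (i = v ∧ j = v') ∨ (i = v' ∧ j = v) then false
    else if ((i = v ∨ i = v') ∧ j = G.n) ∨ ((j = v ∨ j = v') ∧ i = G.n) then true
    else G.adj i j
  mu := fun k => if k = G.n then G.mu v + G.mu v' else G.mu k
  par := fun k => if k = G.n then 1 else if k = v ∨ k = v' then 1 - G.par k else G.par k

/-- The admissible graphs: those generated from the one-vertex graph
(`V = {v₀}`, no edges, `μ(v₀)` an arbitrary positive integer, `p(v₀) = 1`, since the first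
exceptional divisor of the blow-up of a point of `ℝ²` has a Möbius-band neighbourhood) by
finitely many applications of moves A and B. -/
inductive Admissible : ResGraph → Prop
  | init (μ₀ : ℕ) (hμ₀ : 0 < μ₀) :
      Admissible ⟨1, fun _ _ => false, fun _ => μ₀, fun _ => 1⟩
  | moveA (G : ResGraph) (v : ℕ) (hG : Admissible G) (hv : v < G.n) :
      Admissible (G.applyA v)
  | moveB (G : ResGraph) (v v' : ℕ) (hG : Admissible G) (hv : v < G.n) (hv' : v' < G.n)
      (hadj : G.adj v v' = true) :
      Admissible (G.applyB v v')

/-- `ε(v) = p(v) + Σ_{v' adjacent to v} μ(v')/μ(v)`. -/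
noncomputable def eps (G : ResGraph) (v : ℕ) : ℚ :=
  (G.par v : ℚ) +
    (∑ u ∈ (Finset.range G.n).filter (fun u => G.adj v u = true), (G.mu u : ℚ)) / (G.mu v : ℚ)

noncomputable def S (G : ResGraph) (v : ℕ) : ℚ :=
  ∑ u ∈ Finset.range G.n, if G.adj v u = true then (G.mu u : ℚ) else 0

lemma eps_eq (G : ResGraph) (v : ℕ) :
    eps G v = (G.par v : ℚ) + S G v / (G.mu v : ℚ) := by
  unfold eps S
  rw [Finset.sum_filter]

def Inv (G : ResGraph) : Prop :=
  1 ≤ G.n ∧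
  (∀ i j, G.n ≤ i ∨ G.n ≤ j → G.adj i j = false) ∧
  (∀ i j, G.adj i j = G.adj j i) ∧
  (∀ i, G.adj i i = false) ∧
  (∀ k, 0 < G.mu k) ∧
  (∀ k, G.par k ≤ 1) ∧
  ∀ v < G.n, ∃ z : ℤ, eps G v = (z : ℚ) ∧ (v = 0 → Odd z) ∧ (v ≠ 0 → Even z)

lemma eps_step (p : ℕ) (hp : p ≤ 1) (μ : ℚ) (hμ : μ ≠ 0) (Sv : ℚ) (z : ℤ)
    (hz : (p : ℚ) + Sv / μ = (z : ℚ)) :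
    ∃ z' : ℤ, ((1 - p : ℕ) : ℚ) + (Sv + μ) / μ = (z' : ℚ) ∧
      (Odd z → Odd z') ∧ (Even z → Even z') := by
  refine ⟨z + 2 - 2 * p, ?_, ?_, ?_⟩
  · have hS : Sv / μ = (z : ℚ) - p := by linarith
    rw [add_div, div_self hμ, hS]
    interval_cases p <;> push_cast <;> ring
  · rintro ⟨k, hk⟩; exact ⟨k + 1 - p, by omega⟩
  · rintro ⟨k, hk⟩; exact ⟨k + 1 - p, by omega⟩

lemma S_succ (G' : ResGraph) (m : ℕ) (hm : G'.n = m + 1) (x : ℕ) :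
    S G' x = (∑ u ∈ Finset.range m, if G'.adj x u = true then (G'.mu u : ℚ) else 0) +
      (if G'.adj x m = true then (G'.mu m : ℚ) else 0) := by
  unfold S
  rw [hm, Finset.sum_range_succ]

lemma inv_of_admissible (G : ResGraph) (hG : Admissible G) : Inv G := by
  induction hG with
  | init μ₀ hμ₀ =>
      refine ⟨le_refl 1, fun i j _ => rfl, fun i j => rfl, fun i => rfl,
        fun k => hμ₀, fun k => le_refl 1, ?_⟩
      intro v hv
      have hv1 : v < 1 := hv
      have hv0 : v = 0 := by omega
      subst hv0
      refine ⟨1, ?_, fun _ => odd_one, fun h => absurd rfl h⟩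
      simp [eps_eq, S]
  | moveA G v hG hv ih =>
      obtain ⟨hn, hbd, hsym, hirr, hmu, hpar, hmain⟩ := ih
      have hvn : v ≠ G.n := by omega
      have hnv : ¬(G.n = v) := fun h => hvn h.symm
      have hμv : ((G.mu v : ℕ) : ℚ) ≠ 0 := by exact_mod_cast (hmu v).ne'
      refine ⟨show 1 ≤ G.n + 1 by omega, ?_, ?_, ?_, ?_, ?_, ?_⟩
      · intro i j h
        have h' : G.n + 1 ≤ i ∨ G.n + 1 ≤ j := h
        show (if (i = v ∧ j = G.n) ∨ (i = G.n ∧ j = v) then true else G.adj i j) = false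
        split_ifs with hc
        · rcases hc with ⟨rfl, rfl⟩ | ⟨rfl, rfl⟩ <;> omega
        · exact hbd i j (by omega)
      · intro i j
        show (if (i = v ∧ j = G.n) ∨ (i = G.n ∧ j = v) then true else G.adj i j) =
          (if (j = v ∧ i = G.n) ∨ (j = G.n ∧ i = v) then true else G.adj j i)
        exact if_congr (by tauto) rfl (hsym i j)
      · intro i
        show (if (i = v ∧ i = G.n) ∨ (i = G.n ∧ i = v) then true else G.adj i i) = false
        have : ¬((i = v ∧ i = G.n) ∨ (i = G.n ∧ i = v)) := by
          rintro (⟨rfl, h⟩ | ⟨rfl, h⟩) <;> omega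
        rw [if_neg this]
        exact hirr i
      · intro k
        show 0 < if k = G.n then G.mu v else G.mu k
        split_ifs <;> apply hmu
      · intro k
        show (if k = G.n then 1 else if k = v then 1 - G.par k else G.par k) ≤ 1
        have := hpar k
        split_ifs <;> omega
      · intro x hx
        have hx1 : x < G.n + 1 := hx
        by_cases hxn : x = G.n
        · -- new vertex
          subst hxn
          refine ⟨2, ?_, fun h => absurd h (by omega), fun _ => ⟨1, rfl⟩⟩
          have hS : S (G.applyA v) G.n = (G.mu v : ℚ) := by
            rw [S_succ (G.applyA v) G.n rfl G.n]
            have h2 : ∀ u ∈ Finset.range G.n,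
                (if (G.applyA v).adj G.n u = true then ((G.applyA v).mu u : ℚ) else 0) =
                (if u = v then ((G.mu u : ℕ) : ℚ) else 0) := by
              intro u hu
              have hu' : u < G.n := Finset.mem_range.mp hu
              have h1 : ¬(u = G.n) := by omega
              have h5 : G.adj G.n u = false := hbd G.n u (by omega)
              by_cases h3 : u = v <;> simp [applyA, h1, h3, hnv, h5]
            rw [Finset.sum_congr rfl h2,
              Finset.sum_ite_eq' (Finset.range G.n) v (fun u => ((G.mu u : ℕ) : ℚ))]
            have hlast : (G.applyA v).adj G.n G.n = false := by
              have h5 : G.adj G.n G.n = false := hbd G.n G.n (by omega)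
              simp [applyA, hnv, h5]
            simp [hlast, Finset.mem_range.mpr hv]
          have hp : (G.applyA v).par G.n = 1 := by simp [applyA]
          have hm : (G.applyA v).mu G.n = G.mu v := by simp [applyA]
          rw [eps_eq, hS, hp, hm, div_self hμv]
          norm_num
        · have hx' : x < G.n := by omega
          by_cases hxv : x = v
          · subst hxv
            obtain ⟨z, hz, ho, he⟩ := hmain x hx'
            rw [eps_eq] at hz
            have hS : S (G.applyA x) x = S G x + ((G.mu x : ℕ) : ℚ) := by
              rw [S_succ (G.applyA x) G.n rfl x]
              have h2 : ∀ u ∈ Finset.range G.n,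
                  (if (G.applyA x).adj x u = true then ((G.applyA x).mu u : ℚ) else 0) =
                  (if G.adj x u = true then ((G.mu u : ℕ) : ℚ) else 0) := by
                intro u hu
                have hu' : u < G.n := Finset.mem_range.mp hu
                have h1 : ¬(u = G.n) := by omega
                simp [applyA, h1, hxn]
              have hlast : (if (G.applyA x).adj x G.n = true
                  then ((G.applyA x).mu G.n : ℚ) else 0) = ((G.mu x : ℕ) : ℚ) := by
                simp [applyA]
              rw [Finset.sum_congr rfl h2, hlast]
              rfl
            have hp : (G.applyA x).par x = 1 - G.par x := by simp [applyA, hxn]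
            have hm : (G.applyA x).mu x = G.mu x := by simp [applyA, hxn]
            obtain ⟨z', hz', ho', he'⟩ :=
              eps_step (G.par x) (hpar x) ((G.mu x : ℕ) : ℚ) hμv (S G x) z hz
            refine ⟨z', ?_, fun h => ho' (ho h), fun h => he' (he h)⟩
            rw [eps_eq, hS, hp, hm]
            exact_mod_cast hz'
          · obtain ⟨z, hz, ho, he⟩ := hmain x hx'
            refine ⟨z, ?_, ho, he⟩
            rw [eps_eq] at hz ⊢
            have hS : S (G.applyA v) x = S G x := by
              rw [S_succ (G.applyA v) G.n rfl x]
              have h2 : ∀ u ∈ Finset.range G.n,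
                  (if (G.applyA v).adj x u = true then ((G.applyA v).mu u : ℚ) else 0) =
                  (if G.adj x u = true then ((G.mu u : ℕ) : ℚ) else 0) := by
                intro u hu
                have hu' : u < G.n := Finset.mem_range.mp hu
                have h1 : ¬(u = G.n) := by omega
                simp [applyA, h1, hxn]
              have hlast : (if (G.applyA v).adj x G.n = true
                  then ((G.applyA v).mu G.n : ℚ) else 0) = 0 := by
                have h5 : G.adj x G.n = false := hbd x G.n (by omega)
                simp [applyA, hxv, hxn, h5]
              rw [Finset.sum_congr rfl h2, hlast, add_zero]
              rfl
            have hp : (G.applyA v).par x = G.par x := by simp [applyA, hxn, hxv]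
            have hm : (G.applyA v).mu x = G.mu x := by simp [applyA, hxn]
            rw [hS, hp, hm]
            exact hz
  | moveB G v v' hG hv hv' hadj ih =>
      obtain ⟨hn, hbd, hsym, hirr, hmu, hpar, hmain⟩ := ih
      have hvv' : v ≠ v' := by
        intro h; subst h; rw [hirr v] at hadj; exact Bool.false_ne_true hadj
      have hadj' : G.adj v' v = true := by rw [hsym]; exact hadj
      have hvn : v ≠ G.n := by omega
      have hv'n : v' ≠ G.n := by omega
      have hnv : ¬(G.n = v) := fun h => hvn h.symm
      have hnv' : ¬(G.n = v') := fun h => hv'n h.symm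
      have hμv : ((G.mu v : ℕ) : ℚ) ≠ 0 := by exact_mod_cast (hmu v).ne'
      have hμv' : ((G.mu v' : ℕ) : ℚ) ≠ 0 := by exact_mod_cast (hmu v').ne'
      have hv'v : v' ≠ v := Ne.symm hvv'
      refine ⟨show 1 ≤ G.n + 1 by omega, ?_, ?_, ?_, ?_, ?_, ?_⟩
      · intro i j h
        have h' : G.n + 1 ≤ i ∨ G.n + 1 ≤ j := h
        show (if (i = v ∧ j = v') ∨ (i = v' ∧ j = v) then false
          else if ((i = v ∨ i = v') ∧ j = G.n) ∨ ((j = v ∨ j = v') ∧ i = G.n) then true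
          else G.adj i j) = false
        split_ifs with hc1 hc2
        · rfl
        · rcases hc2 with ⟨h1, rfl⟩ | ⟨h1, rfl⟩ <;> rcases h1 with rfl | rfl <;> omega
        · exact hbd i j (by omega)
      · intro i j
        show (if (i = v ∧ j = v') ∨ (i = v' ∧ j = v) then false
          else if ((i = v ∨ i = v') ∧ j = G.n) ∨ ((j = v ∨ j = v') ∧ i = G.n) then true
          else G.adj i j) =
          (if (j = v ∧ i = v') ∨ (j = v' ∧ i = v) then false
          else if ((j = v ∨ j = v') ∧ i = G.n) ∨ ((i = v ∨ i = v') ∧ j = G.n) then true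
          else G.adj j i)
        exact if_congr (by tauto) rfl (if_congr (by tauto) rfl (hsym i j))
      · intro i
        show (if (i = v ∧ i = v') ∨ (i = v' ∧ i = v) then false
          else if ((i = v ∨ i = v') ∧ i = G.n) ∨ ((i = v ∨ i = v') ∧ i = G.n) then true
          else G.adj i i) = false
        have hc2 : ¬(((i = v ∨ i = v') ∧ i = G.n) ∨ ((i = v ∨ i = v') ∧ i = G.n)) := by
          rintro (⟨h1, rfl⟩ | ⟨h1, rfl⟩) <;> rcases h1 with rfl | rfl <;> omega
        split_ifs with hc1
        · rfl
        · exact hirr i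
      · intro k
        show 0 < if k = G.n then G.mu v + G.mu v' else G.mu k
        split_ifs
        · exact Nat.add_pos_left (hmu v) _
        · apply hmu
      · intro k
        show (if k = G.n then 1 else if k = v ∨ k = v' then 1 - G.par k else G.par k) ≤ 1
        have := hpar k
        split_ifs <;> omega
      · intro x hx
        have hx1 : x < G.n + 1 := hx
        by_cases hxn : x = G.n
        · -- new vertex
          subst hxn
          refine ⟨2, ?_, fun h => absurd h (by omega), fun _ => ⟨1, rfl⟩⟩
          have hS : S (G.applyB v v') G.n = ((G.mu v : ℕ) : ℚ) + ((G.mu v' : ℕ) : ℚ) := by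
            rw [S_succ (G.applyB v v') G.n rfl G.n]
            have h2 : ∀ u ∈ Finset.range G.n,
                (if (G.applyB v v').adj G.n u = true then ((G.applyB v v').mu u : ℚ) else 0) =
                ((if u = v then ((G.mu u : ℕ) : ℚ) else 0) +
                 (if u = v' then ((G.mu u : ℕ) : ℚ) else 0)) := by
              intro u hu
              have hu' : u < G.n := Finset.mem_range.mp hu
              have h1 : ¬(u = G.n) := by omega
              have h5 : G.adj G.n u = false := hbd G.n u (by omega)
              by_cases h3 : u = v
              · have h4 : ¬(u = v') := by rw [h3]; exact hvv'
                simp [applyB, h1, h3, h4, hnv, hnv', h5, hvn, hvv']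
              · by_cases h4 : u = v'
                · simp [applyB, h1, h3, h4, hnv, hnv', h5, hv'n, hv'v]
                · simp [applyB, h1, h3, h4, hnv, hnv', h5]
            have hlast : (if (G.applyB v v').adj G.n G.n = true
                then ((G.applyB v v').mu G.n : ℚ) else 0) = 0 := by
              have h5 : G.adj G.n G.n = false := hbd G.n G.n (by omega)
              simp [applyB, hnv, hnv', h5]
            rw [Finset.sum_congr rfl h2, hlast, add_zero, Finset.sum_add_distrib,
              Finset.sum_ite_eq' (Finset.range G.n) v (fun u => ((G.mu u : ℕ) : ℚ)),
              Finset.sum_ite_eq' (Finset.range G.n) v' (fun u => ((G.mu u : ℕ) : ℚ)),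
              if_pos (Finset.mem_range.mpr hv), if_pos (Finset.mem_range.mpr hv')]
          have hp : (G.applyB v v').par G.n = 1 := by simp [applyB]
          have hm : (G.applyB v v').mu G.n = G.mu v + G.mu v' := by simp [applyB]
          have hμ : ((G.mu v + G.mu v' : ℕ) : ℚ) ≠ 0 := by
            push_cast
            intro h
            exact hμv (by linarith [ (show (0:ℚ) ≤ (G.mu v' : ℚ) from by positivity) ,
              (show (0:ℚ) ≤ (G.mu v : ℚ) from by positivity)])
          rw [eps_eq, hS, hp, hm]
          rw [show ((G.mu v : ℕ) : ℚ) + ((G.mu v' : ℕ) : ℚ) = ((G.mu v + G.mu v' : ℕ) : ℚ)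
            from by push_cast; ring, div_self hμ]
          norm_num
        · have hx' : x < G.n := by omega
          by_cases hxv : x = v
          · subst hxv
            obtain ⟨z, hz, ho, he⟩ := hmain x hx'
            rw [eps_eq] at hz
            have hS : S (G.applyB x v') x = S G x + ((G.mu x : ℕ) : ℚ) := by
              rw [S_succ (G.applyB x v') G.n rfl x]
              have h2 : ∀ u ∈ Finset.range G.n,
                  (if (G.applyB x v').adj x u = true then ((G.applyB x v').mu u : ℚ) else 0) =
                  ((if G.adj x u = true then ((G.mu u : ℕ) : ℚ) else 0) -
                   (if u = v' then ((G.mu u : ℕ) : ℚ) else 0)) := by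
                intro u hu
                have hu' : u < G.n := Finset.mem_range.mp hu
                have h1 : ¬(u = G.n) := by omega
                by_cases h3 : u = v'
                · subst h3
                  simp [applyB, h1, hadj]
                · have hxv' : ¬(x = v') := hvv'
                  simp [applyB, h1, h3, hxn, hxv']
              have hlast : (if (G.applyB x v').adj x G.n = true
                  then ((G.applyB x v').mu G.n : ℚ) else 0) =
                  ((G.mu x : ℕ) : ℚ) + ((G.mu v' : ℕ) : ℚ) := by
                have h6 : ¬(G.n = v') := hnv'
                have h7 : ¬(G.n = x) := fun h => hxn h.symm
                simp [applyB, h6, h7]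
              rw [Finset.sum_congr rfl h2, hlast, Finset.sum_sub_distrib,
                Finset.sum_ite_eq' (Finset.range G.n) v' (fun u => ((G.mu u : ℕ) : ℚ)),
                if_pos (Finset.mem_range.mpr hv')]
              unfold S
              ring
            have hp : (G.applyB x v').par x = 1 - G.par x := by
              simp [applyB, hxn]
            have hm : (G.applyB x v').mu x = G.mu x := by simp [applyB, hxn]
            obtain ⟨z', hz', ho', he'⟩ :=
              eps_step (G.par x) (hpar x) ((G.mu x : ℕ) : ℚ) hμv (S G x) z hz
            refine ⟨z', ?_, fun h => ho' (ho h), fun h => he' (he h)⟩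
            rw [eps_eq, hS, hp, hm]
            exact_mod_cast hz'
          · by_cases hxv' : x = v'
            · subst hxv'
              obtain ⟨z, hz, ho, he⟩ := hmain x hx'
              rw [eps_eq] at hz
              have hS : S (G.applyB v x) x = S G x + ((G.mu x : ℕ) : ℚ) := by
                rw [S_succ (G.applyB v x) G.n rfl x]
                have h2 : ∀ u ∈ Finset.range G.n,
                    (if (G.applyB v x).adj x u = true then ((G.applyB v x).mu u : ℚ) else 0) =
                    ((if G.adj x u = true then ((G.mu u : ℕ) : ℚ) else 0) -
                     (if u = v then ((G.mu u : ℕ) : ℚ) else 0)) := by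
                  intro u hu
                  have hu' : u < G.n := Finset.mem_range.mp hu
                  have h1 : ¬(u = G.n) := by omega
                  by_cases h3 : u = v
                  · subst h3
                    simp [applyB, h1, hadj', hxv]
                  · simp [applyB, h1, h3, hxn, hxv]
                have hlast : (if (G.applyB v x).adj x G.n = true
                    then ((G.applyB v x).mu G.n : ℚ) else 0) =
                    ((G.mu v : ℕ) : ℚ) + ((G.mu x : ℕ) : ℚ) := by
                  have h6 : ¬(G.n = v) := hnv
                  have h7 : ¬(G.n = x) := fun h => hxn h.symm
                  simp [applyB, h6, h7, hxv]
                rw [Finset.sum_congr rfl h2, hlast, Finset.sum_sub_distrib,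
                  Finset.sum_ite_eq' (Finset.range G.n) v (fun u => ((G.mu u : ℕ) : ℚ)),
                  if_pos (Finset.mem_range.mpr hv)]
                unfold S
                ring
              have hp : (G.applyB v x).par x = 1 - G.par x := by
                simp [applyB, hxn]
              have hm : (G.applyB v x).mu x = G.mu x := by simp [applyB, hxn]
              obtain ⟨z', hz', ho', he'⟩ :=
                eps_step (G.par x) (hpar x) ((G.mu x : ℕ) : ℚ) hμv' (S G x) z hz
              refine ⟨z', ?_, fun h => ho' (ho h), fun h => he' (he h)⟩
              rw [eps_eq, hS, hp, hm]
              exact_mod_cast hz'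
            · obtain ⟨z, hz, ho, he⟩ := hmain x hx'
              refine ⟨z, ?_, ho, he⟩
              rw [eps_eq] at hz ⊢
              have hS : S (G.applyB v v') x = S G x := by
                rw [S_succ (G.applyB v v') G.n rfl x]
                have h2 : ∀ u ∈ Finset.range G.n,
                    (if (G.applyB v v').adj x u = true
                      then ((G.applyB v v').mu u : ℚ) else 0) =
                    (if G.adj x u = true then ((G.mu u : ℕ) : ℚ) else 0) := by
                  intro u hu
                  have hu' : u < G.n := Finset.mem_range.mp hu
                  have h1 : ¬(u = G.n) := by omega
                  simp [applyB, h1, hxn, hxv, hxv']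
                have hlast : (if (G.applyB v v').adj x G.n = true
                    then ((G.applyB v v').mu G.n : ℚ) else 0) = 0 := by
                  have h5 : G.adj x G.n = false := hbd x G.n (by omega)
                  simp [applyB, hxv, hxv', hxn, hnv, hnv', h5]
                rw [Finset.sum_congr rfl h2, hlast, add_zero]
                rfl
              have hp : (G.applyB v v').par x = G.par x := by
                simp [applyB, hxn, hxv, hxv']
              have hm : (G.applyB v v').mu x = G.mu x := by simp [applyB, hxn]
              rw [hS, hp, hm]
              exact hz

/-- **Lemma (Section 3).**  For every admissible graph and every vertex `v`, the number
`ε(v) = p(v) + Σ_{v' adjacent to v} μ(v')/μ(v)` is an integer; `ε(v₀)` is odd and `ε(v)` is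
even for every vertex `v ≠ v₀`.  (This recognises the first exceptional divisor `E₁` on the
weighted dual resolution graph when the leading form of `f` vanishes only at the origin.) -/
theorem eps_integral_parity (G : ResGraph) (hG : Admissible G) :
    ∀ v < G.n, ∃ z : ℤ, eps G v = (z : ℚ) ∧ (v = 0 → Odd z) ∧ (v ≠ 0 → Even z) := by
  exact (inv_of_admissible G hG).2.2.2.2.2.2

end ResGraph
end

section
/- Let h : (ℝ²,0) → (ℝ²,0) be a germ of homeomorphism admitting a lift to the blow-up of the origin, i.e. a germ of homeomorphism h_1 between neighbourhoods of the exceptional divisor E in B with h_1(E) = E and π ∘ h_1 = h ∘ π. Then for every nonconstant real analytic arc γ : (ℝ,0) → (ℝ²,0), the curve h ∘ γ admits a limit tangent direction in ℝP¹, i.e. lim_{t→0, t≠0} [h(γ(t))] ∈ ℝP¹ exists, where [p] denotes the line through 0 and p; and for any two nonconstant real analytic arcs γ_1, γ_2 at 0, the limit tangent directions of h ∘ γ_1 and h ∘ γ_2 coincide if and only if the limit tangent directions of γ_1 and γ_2 coincide. In particular, a homeomorphism germ which lifts to the blow-up of the origin preserves tangency of real analytic arcs (the first level of Theorem 5.1(a)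 of the paper on cascade blow-analytic homeomorphisms). -/
/-!
A curve `p → 0` with limit direction `ℓ` lifts to the blow-up as `t ↦ (p t, [p t])`, which
converges to the point `(0, ℓ)` of `E`. Since `h₁` is injective with `h₁(E) = E`, it keeps
`B ∖ E` off `E`, so the second coordinate of `h₁ (p t, [p t])` is `[h (p t)]`; by continuity of
`h₁` this tends to the direction of `h₁ (0, ℓ)`. Hence `h` sends limit directions through the
injective map `h₁|_E : ℝP¹ → ℝP¹`. A nonconstant analytic arc is `tⁿ • g t` with `g 0 ≠ 0`,
so its limit direction exists and is `[g 0]`.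
-/

open Filter Topology

noncomputable instance : TopologicalSpace (Projectivization ℝ (ℝ × ℝ)) :=
  inferInstanceAs (TopologicalSpace (Quotient _))

/-- The blow-up `B = {((x,y), ℓ) ∈ ℝ² × ℝP¹ : (x,y) ∈ ℓ}` of `ℝ²` at the origin. -/
def BlowUp : Type :=
  {q : (ℝ × ℝ) × Projectivization ℝ (ℝ × ℝ) // q.1 ∈ q.2.submodule}

noncomputable instance : TopologicalSpace BlowUp :=
  inferInstanceAs (TopologicalSpace {q : (ℝ × ℝ) × Projectivization ℝ (ℝ × ℝ) // q.1 ∈ q.2.submodule})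

/-- The projection `π : B → ℝ²`. -/
def blowUpProj (q : BlowUp) : ℝ × ℝ := q.val.1

/-- The exceptional divisor `E = π⁻¹(0) ⊆ B`. -/
def blowUpE : Set BlowUp := {q | q.val.1 = 0}

/-- The line `[p] ∈ ℝP¹` through `0` and `p` (with a junk value at `p = 0`). -/
noncomputable def dir (p : ℝ × ℝ) : Projectivization ℝ (ℝ × ℝ) :=
  if h : p ≠ 0 then Projectivization.mk ℝ p h
  else Projectivization.mk ℝ (1, 0) (by simp)

open scoped LinearAlgebra.Projectivization

namespace Projectivization

theorem mk_eq_mk_iff_mul_eq_mul {K : Type*} [Field K] {v w : K × K} (hv : v ≠ 0) (hw : w ≠ 0) :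
    mk K v hv = mk K w hw ↔ v.1 * w.2 = v.2 * w.1 := by
  rw [mk_eq_mk_iff']
  constructor
  · rintro ⟨c, rfl⟩
    simp only [Prod.smul_fst, Prod.smul_snd, smul_eq_mul]
    ring
  · intro hvw
    rcases eq_or_ne w.1 0 with hw1 | hw1
    · have hw2 : w.2 ≠ 0 := fun hw2 => hw (Prod.ext hw1 hw2)
      refine ⟨v.2 / w.2, Prod.ext ?_ ?_⟩
      · simp only [Prod.smul_fst, smul_eq_mul, hw1, mul_zero]
        rw [hw1, mul_zero] at hvw
        exact ((mul_eq_zero.1 hvw).resolve_right hw2).symm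
      · simp only [Prod.smul_snd, smul_eq_mul]
        field_simp
    · refine ⟨v.1 / w.1, Prod.ext ?_ ?_⟩
      · simp only [Prod.smul_fst, smul_eq_mul]
        field_simp
      · simp only [Prod.smul_snd, smul_eq_mul]
        field_simp
        linear_combination hvw

theorem isQuotientMap_mk' : IsQuotientMap (mk' ℝ : {v : ℝ × ℝ // v ≠ 0} → ℙ ℝ (ℝ × ℝ)) :=
  isQuotientMap_quotient_mk'

theorem isOpenMap_mk' : IsOpenMap (mk' ℝ : {v : ℝ × ℝ // v ≠ 0} → ℙ ℝ (ℝ × ℝ)) := by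
  intro S hS
  rw [← isQuotientMap_mk'.isOpen_preimage]
  have : (mk' ℝ ⁻¹' (mk' ℝ '' S) : Set {v : ℝ × ℝ // v ≠ 0}) =
      ⋃ c : ℝˣ, (fun v => ⟨c • v.1, (smul_ne_zero_iff_ne c).2 v.2⟩) ⁻¹' S := by
    ext v
    simp only [Set.mem_preimage, Set.mem_image, Set.mem_iUnion, mk'_eq_mk, mk_eq_mk_iff]
    constructor
    · rintro ⟨x, hx, c, hc⟩
      obtain rfl : x = ⟨c • v.1, (smul_ne_zero_iff_ne c).2 v.2⟩ := Subtype.ext hc.symm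
      exact ⟨c, hx⟩
    · rintro ⟨c, hc⟩
      exact ⟨_, hc, c, rfl⟩
  rw [this]
  exact isOpen_iUnion fun c => hS.preimage (by fun_prop)

instance : T2Space (ℙ ℝ (ℝ × ℝ)) := by
  rw [t2Space_iff_of_isOpenQuotientMap (π := mk' ℝ)
    ⟨isQuotientMap_mk'.surjective, isQuotientMap_mk'.continuous, isOpenMap_mk'⟩]
  have : {q : {v : ℝ × ℝ // v ≠ 0} × {v : ℝ × ℝ // v ≠ 0} | mk' ℝ q.1 = mk' ℝ q.2} =
      {q | q.1.1.1 * q.2.1.2 = q.1.1.2 * q.2.1.1} := by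
    ext q
    exact mk_eq_mk_iff_mul_eq_mul q.1.2 q.2.2
  rw [this]
  exact isClosed_eq (by fun_prop) (by fun_prop)

end Projectivization

theorem dir_of_ne_zero {p : ℝ × ℝ} (hp : p ≠ 0) : dir p = Projectivization.mk ℝ p hp := dif_pos hp

theorem dir_smul {c : ℝ} (hc : c ≠ 0) {p : ℝ × ℝ} (hp : p ≠ 0) : dir (c • p) = dir p := by
  rw [dir_of_ne_zero (smul_ne_zero hc hp), dir_of_ne_zero hp]
  exact (Projectivization.mk_eq_mk_iff' ℝ _ _ _ _).2 ⟨c, rfl⟩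

theorem continuousAt_dir {p : ℝ × ℝ} (hp : p ≠ 0) : ContinuousAt dir p := by
  have hdir : ContinuousOn dir {p | p ≠ 0} := by
    rw [continuousOn_iff_continuous_domRestrict]
    refine Projectivization.isQuotientMap_mk'.continuous.congr fun x => ?_
    rw [Set.domRestrict_apply, dir_of_ne_zero x.2, Projectivization.mk'_eq_mk]
  exact hdir.continuousAt (isOpen_ne.mem_nhds hp)

theorem mem_dir_submodule (p : ℝ × ℝ) : p ∈ (dir p).submodule := by
  rcases eq_or_ne p 0 with rfl | hp
  · exact Submodule.zero_mem _
  · rw [dir_of_ne_zero hp, Projectivization.submodule_mk]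
    exact Submodule.mem_span_singleton_self p

theorem AnalyticAt.exists_tendsto_dir {γ : ℝ → ℝ × ℝ} {t₀ : ℝ} (hγ : AnalyticAt ℝ γ t₀)
    (hne : ¬ ∀ᶠ t in 𝓝 t₀, γ t = 0) :
    ∃ ℓ, Tendsto (fun t => dir (γ t)) (𝓝[≠] t₀) (𝓝 ℓ) := by
  obtain ⟨n, g, hg, hg0, hγg⟩ := hγ.exists_eventuallyEq_pow_smul_nonzero_iff.2 hne
  refine ⟨dir (g t₀), ((continuousAt_dir hg0).comp hg.continuousAt).tendsto.mono_left
    nhdsWithin_le_nhds |>.congr' ?_⟩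
  filter_upwards [nhdsWithin_le_nhds hγg, nhdsWithin_le_nhds (hg.continuousAt.eventually_ne hg0),
    self_mem_nhdsWithin] with t hγt hgt ht
  rw [Function.comp_apply, hγt, dir_smul (pow_ne_zero _ (sub_ne_zero.2 ht)) hgt]

namespace BlowUp

def divisorPoint (ℓ : ℙ ℝ (ℝ × ℝ)) : BlowUp := ⟨(0, ℓ), Submodule.zero_mem _⟩

noncomputable def ofPoint (p : ℝ × ℝ) : BlowUp := ⟨(p, dir p), mem_dir_submodule p⟩

/-- The restriction of `h₁` to `E ≅ ℝP¹`. -/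
noncomputable def divisorMap (h₁ : BlowUp → BlowUp) (ℓ : ℙ ℝ (ℝ × ℝ)) : ℙ ℝ (ℝ × ℝ) :=
  (h₁ (divisorPoint ℓ)).val.2

theorem divisorPoint_mem (ℓ : ℙ ℝ (ℝ × ℝ)) : divisorPoint ℓ ∈ blowUpE := rfl

theorem divisorPoint_snd {q : BlowUp} (hq : q ∈ blowUpE) : divisorPoint q.val.2 = q :=
  Subtype.ext (Prod.ext hq.symm rfl)

theorem ofPoint_notMem {p : ℝ × ℝ} (hp : p ≠ 0) : ofPoint p ∉ blowUpE := hp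

theorem snd_eq_dir {q : BlowUp} (hq : blowUpProj q ≠ 0) : q.val.2 = dir (blowUpProj q) := by
  obtain ⟨a, ha⟩ := Submodule.mem_span_singleton.1 (q.val.2.submodule_eq ▸ q.property)
  rw [dir_of_ne_zero hq, ← q.val.2.mk_rep]
  exact ((Projectivization.mk_eq_mk_iff' ℝ _ _ _ _).2 ⟨a, ha⟩).symm

theorem tendsto_ofPoint {α : Type*} {l : Filter α} {p : α → ℝ × ℝ} {ℓ : ℙ ℝ (ℝ × ℝ)}
    (hp : Tendsto p l (𝓝 0)) (hdir : Tendsto (fun t => dir (p t)) l (𝓝 ℓ)) :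
    Tendsto (fun t => ofPoint (p t)) l (𝓝 (divisorPoint ℓ)) :=
  IsEmbedding.subtypeVal.tendsto_nhds_iff.2 (hp.prodMk_nhds hdir)

theorem divisorMap_injective {h₁ : BlowUp → BlowUp} (h₁inj : Set.InjOn h₁ blowUpE)
    (h₁E : Set.MapsTo h₁ blowUpE blowUpE) : Function.Injective (divisorMap h₁) := by
  intro a b hab
  have : h₁ (divisorPoint a) = h₁ (divisorPoint b) := by
    rw [← divisorPoint_snd (h₁E (divisorPoint_mem a)),
      ← divisorPoint_snd (h₁E (divisorPoint_mem b))]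
    exact congrArg divisorPoint hab
  exact congrArg (fun q : BlowUp => q.val.2)
    (h₁inj (divisorPoint_mem a) (divisorPoint_mem b) this)

theorem tendsto_dir_comp_of_lift {h : ℝ × ℝ → ℝ × ℝ} {h₁ : BlowUp → BlowUp} {W : Set BlowUp}
    {ℓ : ℙ ℝ (ℝ × ℝ)} (hW : W ∈ 𝓝 (divisorPoint ℓ)) (h₁c : ContinuousAt h₁ (divisorPoint ℓ))
    (h₁E : Set.MapsTo h₁ (W \ blowUpE) blowUpEᶜ)
    (hcomm : ∀ q ∈ W, blowUpProj (h₁ q) = h (blowUpProj q))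
    {α : Type*} {l : Filter α} {p : α → ℝ × ℝ} (hp : Tendsto p l (𝓝 0))
    (hp0 : ∀ᶠ t in l, p t ≠ 0) (hdir : Tendsto (fun t => dir (p t)) l (𝓝 ℓ)) :
    Tendsto (fun t => dir (h (p t))) l (𝓝 (divisorMap h₁ ℓ)) := by
  have hlift := tendsto_ofPoint hp hdir
  have hsnd : Continuous fun q : BlowUp => q.val.2 := continuous_snd.comp continuous_subtype_val
  refine (hsnd.tendsto _ |>.comp (h₁c.tendsto.comp hlift)).congr' ?_
  filter_upwards [hlift.eventually hW, hp0] with t htW ht0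
  change (h₁ (ofPoint (p t))).val.2 = dir (h (p t))
  rw [snd_eq_dir (h₁E ⟨htW, ofPoint_notMem ht0⟩), hcomm _ htW]
  rfl

end BlowUp

theorem lift_to_blowup_preserves_tangency_general
    (h : ℝ × ℝ → ℝ × ℝ)
    (h₁ : BlowUp → BlowUp) (W : Set BlowUp)
    (hW : IsOpen W) (hEW : blowUpE ⊆ W)
    (h₁c : ContinuousOn h₁ W) (h₁inj : Set.InjOn h₁ W)
    (h₁E : h₁ '' blowUpE = blowUpE)
    (hcomm : ∀ q ∈ W, blowUpProj (h₁ q) = h (blowUpProj q)) :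
    ∀ γ₁ γ₂ : ℝ → ℝ × ℝ,
      AnalyticAt ℝ γ₁ 0 → γ₁ 0 = 0 → (¬ ∀ᶠ t in 𝓝 (0 : ℝ), γ₁ t = 0) →
      AnalyticAt ℝ γ₂ 0 → γ₂ 0 = 0 → (¬ ∀ᶠ t in 𝓝 (0 : ℝ), γ₂ t = 0) →
      (∃ ℓ : Projectivization ℝ (ℝ × ℝ),
          Tendsto (fun t => dir (h (γ₁ t))) (𝓝[≠] (0 : ℝ)) (𝓝 ℓ)) ∧
      (∀ ℓ₁ ℓ₂ ℓ₁' ℓ₂' : Projectivization ℝ (ℝ × ℝ),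
          Tendsto (fun t => dir (γ₁ t)) (𝓝[≠] (0 : ℝ)) (𝓝 ℓ₁) →
          Tendsto (fun t => dir (γ₂ t)) (𝓝[≠] (0 : ℝ)) (𝓝 ℓ₂) →
          Tendsto (fun t => dir (h (γ₁ t))) (𝓝[≠] (0 : ℝ)) (𝓝 ℓ₁') →
          Tendsto (fun t => dir (h (γ₂ t))) (𝓝[≠] (0 : ℝ)) (𝓝 ℓ₂') →
          (ℓ₁' = ℓ₂' ↔ ℓ₁ = ℓ₂)) := by
  have hoff : Set.MapsTo h₁ (W \ blowUpE) blowUpEᶜ := fun q hq hq' =>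
    hq.2 ((h₁inj.mem_image_iff hEW hq.1).1 (h₁E.symm ▸ hq'))
  have htangent : ∀ γ : ℝ → ℝ × ℝ, AnalyticAt ℝ γ 0 → γ 0 = 0 →
      (¬ ∀ᶠ t in 𝓝 (0 : ℝ), γ t = 0) → ∀ ℓ, Tendsto (fun t => dir (γ t)) (𝓝[≠] 0) (𝓝 ℓ) →
      Tendsto (fun t => dir (h (γ t))) (𝓝[≠] 0) (𝓝 (BlowUp.divisorMap h₁ ℓ)) := by
    intro γ hγ hγ0 hne ℓ hℓ
    have hW' : W ∈ 𝓝 (BlowUp.divisorPoint ℓ) := hW.mem_nhds (hEW (BlowUp.divisorPoint_mem ℓ))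
    exact BlowUp.tendsto_dir_comp_of_lift hW' (h₁c.continuousAt hW') hoff hcomm
      (hγ0 ▸ hγ.continuousAt.tendsto.mono_left nhdsWithin_le_nhds)
      (hγ.eventually_eq_zero_or_eventually_ne_zero.resolve_left hne) hℓ
  have hinj : Function.Injective (BlowUp.divisorMap h₁) :=
    BlowUp.divisorMap_injective (h₁inj.mono hEW) (Set.mapsTo_iff_image_subset.2 h₁E.le)
  intro γ₁ γ₂ hγ₁ hγ₁0 hne₁ hγ₂ hγ₂0 hne₂
  obtain ⟨ℓ₁, hℓ₁⟩ := hγ₁.exists_tendsto_dir hne₁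
  obtain ⟨ℓ₂, hℓ₂⟩ := hγ₂.exists_tendsto_dir hne₂
  have hh₁ := htangent γ₁ hγ₁ hγ₁0 hne₁ ℓ₁ hℓ₁
  have hh₂ := htangent γ₂ hγ₂ hγ₂0 hne₂ ℓ₂ hℓ₂
  refine ⟨⟨_, hh₁⟩, fun m₁ m₂ m₁' m₂' hm₁ hm₂ hm₁' hm₂' => ?_⟩
  rw [tendsto_nhds_unique hm₁ hℓ₁, tendsto_nhds_unique hm₂ hℓ₂, tendsto_nhds_unique hm₁' hh₁,
    tendsto_nhds_unique hm₂' hh₂, hinj.eq_iff]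

/-- **Theorem 5.1(a), first level.**  Let `h : (ℝ²,0) → (ℝ²,0)` be a germ of homeomorphism
admitting a lift to the blow-up of the origin: a germ of homeomorphism `h₁` between
neighbourhoods of the exceptional divisor `E` in `B` with `h₁(E) = E` and `π ∘ h₁ = h ∘ π`.
Then for every nonconstant real analytic arc `γ` at `0`, the limit tangent direction
`lim_{t→0,t≠0} [h(γ(t))] ∈ ℝP¹` exists, and for any two nonconstant real analytic arcs
`γ₁, γ₂` at `0`, the limit tangent directions of `h ∘ γ₁` and `h ∘ γ₂` coincide if and only if
those of `γ₁` and `γ₂` coincide: `h` preserves tangency of real analytic arcs. -/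
theorem lift_to_blowup_preserves_tangency
    (h hinv : ℝ × ℝ → ℝ × ℝ) (U V : Set (ℝ × ℝ))
    (hU : IsOpen U) (hV : IsOpen V) (h0U : (0 : ℝ × ℝ) ∈ U) (h0V : (0 : ℝ × ℝ) ∈ V)
    (hh0 : h 0 = 0)
    (hhc : ContinuousOn h U) (hinvc : ContinuousOn hinv V)
    (hbij : Set.BijOn h U V)
    (hleft : ∀ x ∈ U, hinv (h x) = x) (hright : ∀ y ∈ V, h (hinv y) = y)
    (h₁ : BlowUp → BlowUp) (W : Set BlowUp)
    (hW : IsOpen W) (hEW : blowUpE ⊆ W)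
    (h₁c : ContinuousOn h₁ W) (h₁inj : Set.InjOn h₁ W)
    (h₁E : h₁ '' blowUpE = blowUpE)
    (hcomm : ∀ q ∈ W, blowUpProj (h₁ q) = h (blowUpProj q)) :
    ∀ γ₁ γ₂ : ℝ → ℝ × ℝ,
      AnalyticAt ℝ γ₁ 0 → γ₁ 0 = 0 → (¬ ∀ᶠ t in 𝓝 (0 : ℝ), γ₁ t = 0) →
      AnalyticAt ℝ γ₂ 0 → γ₂ 0 = 0 → (¬ ∀ᶠ t in 𝓝 (0 : ℝ), γ₂ t = 0) →
      (∃ ℓ : Projectivization ℝ (ℝ × ℝ),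
          Tendsto (fun t => dir (h (γ₁ t))) (𝓝[≠] (0 : ℝ)) (𝓝 ℓ)) ∧
      (∀ ℓ₁ ℓ₂ ℓ₁' ℓ₂' : Projectivization ℝ (ℝ × ℝ),
          Tendsto (fun t => dir (γ₁ t)) (𝓝[≠] (0 : ℝ)) (𝓝 ℓ₁) →
          Tendsto (fun t => dir (γ₂ t)) (𝓝[≠] (0 : ℝ)) (𝓝 ℓ₂) →
          Tendsto (fun t => dir (h (γ₁ t))) (𝓝[≠] (0 : ℝ)) (𝓝 ℓ₁') →
          Tendsto (fun t => dir (h (γ₂ t))) (𝓝[≠] (0 : ℝ)) (𝓝 ℓ₂') →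
          (ℓ₁' = ℓ₂' ↔ ℓ₁ = ℓ₂)) :=
  lift_to_blowup_preserves_tangency_general h h₁ W hW hEW h₁c h₁inj h₁E hcomm
end
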